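/- arXiv:cs/0503085 — 7 statements merged into one kernel-verified Lean document; each statement's English description precedes it below -/
import Mathlib

section
/- Let S = s_1⋯s_m be a string with m ≥ 1 and let R = {i : 1 ≤ i ≤ m, s_i ∈ {s_1,…,s_{i−1}}}. Then ∑_{i∈R} log( i / #_{s_i}(s_1⋯s_{i−1}) ) ≤ log(m!) − ∑_{a∈S} log(#_a(S)!) + ∑_{a∈S} log #_a(S), where the last two sums range over the distinct characters occurring in S. -/
def cnt {α : Type*} [DecidableEq α] (s : ℕ → α) (a : α) (i : ℕ) : ℕ :=
  ((Finset.Icc 1 i).filter (fun j => s j = a)).card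

def repSet {α : Type*} [DecidableEq α] (s : ℕ → α) (m : ℕ) : Finset ℕ :=
  (Finset.Icc 1 m).filter (fun i => s i ∈ (Finset.Icc 1 (i - 1)).image s)

section aux
variable {α : Type*} [DecidableEq α] (s : ℕ → α)

lemma Icc_succ' (m : ℕ) : Finset.Icc 1 (m+1) = insert (m+1) (Finset.Icc 1 m) := by
  ext j; simp [Finset.mem_Icc]; omega

lemma notmem_Icc (m : ℕ) : m + 1 ∉ Finset.Icc 1 m := by simp

lemma cnt_succ (a : α) (i : ℕ) :
    cnt s a (i+1) = cnt s a i + if s (i+1) = a then 1 else 0 := by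
  unfold cnt
  rw [Icc_succ', Finset.filter_insert]
  split
  · rw [Finset.card_insert_of_notMem (by simp [Finset.mem_filter])]
  · simp

lemma mem_image_iff_cnt (a : α) (m : ℕ) :
    a ∈ (Finset.Icc 1 m).image s ↔ 1 ≤ cnt s a m := by
  rw [cnt, Nat.succ_le_iff, Finset.card_pos, Finset.filter_nonempty_iff]
  simp [Finset.mem_image]

lemma repSet_succ (m : ℕ) :
    repSet s (m+1) =
      if s (m+1) ∈ (Finset.Icc 1 m).image s then insert (m+1) (repSet s m)
      else repSet s m := by
  unfold repSet
  rw [Icc_succ', Finset.filter_insert]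
  simp only [Nat.add_sub_cancel]

lemma cnt_succ_ne (a : α) (m : ℕ) (h : s (m+1) ≠ a) : cnt s a (m+1) = cnt s a m := by
  rw [cnt_succ]; simp [h]

lemma logb_fact_succ (n : ℕ) :
    Real.logb 2 (Nat.factorial (n+1) : ℝ)
      = Real.logb 2 (Nat.factorial n : ℝ) + Real.logb 2 ((n:ℝ)+1) := by
  have h : ((Nat.factorial (n+1) : ℕ) : ℝ) = ((n:ℝ)+1) * (Nat.factorial n : ℝ) := by
    rw [Nat.factorial_succ]; push_cast; ring
  rw [h, Real.logb_mul (by positivity)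
    (Nat.cast_ne_zero.mpr (Nat.factorial_ne_zero n))]
  ring

theorem aux_ind (m : ℕ) :
    ∑ i ∈ repSet s m,
        Real.logb 2 ((i : ℝ) / (cnt s (s i) (i - 1) : ℝ))
      ≤ Real.logb 2 (Nat.factorial m : ℝ)
        - ∑ a ∈ (Finset.Icc 1 m).image s,
            Real.logb 2 (Nat.factorial (cnt s a m) : ℝ)
        + ∑ a ∈ (Finset.Icc 1 m).image s,
            Real.logb 2 (cnt s a m : ℝ) := by
  induction m with
  | zero => simp [repSet, cnt]
  | succ m ih =>
    set a := s (m+1) with ha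
    set T := (Finset.Icc 1 m).image s with hT
    have himg : (Finset.Icc 1 (m+1)).image s = insert a T := by
      rw [Icc_succ', Finset.image_insert]
    have hcnt_ne : ∀ b ∈ T.erase a, cnt s b (m+1) = cnt s b m := by
      intro b hb
      exact cnt_succ_ne s b m (Ne.symm (Finset.ne_of_mem_erase hb))
    by_cases hmem : a ∈ T
    · -- repeated character
      have hc1 : 1 ≤ cnt s a m := (mem_image_iff_cnt s a m).mp hmem
      have hcpos : (0:ℝ) < (cnt s a m : ℝ) := by exact_mod_cast hc1
      have hrep : repSet s (m+1) = insert (m+1) (repSet s m) := by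
        rw [repSet_succ, if_pos hmem]
      have hnm : m + 1 ∉ repSet s m := fun h =>
        notmem_Icc m (Finset.mem_of_mem_filter _ h)
      have himg' : (Finset.Icc 1 (m+1)).image s = T := by
        rw [himg, Finset.insert_eq_self.mpr hmem]
      have hcnta : cnt s a (m+1) = cnt s a m + 1 := by rw [cnt_succ]; simp [ha]
      have hcnta' : ((cnt s a (m+1) : ℕ) : ℝ) = (cnt s a m : ℝ) + 1 := by
        rw [hcnta]; push_cast; ring
      have hcongr1 : ∀ b ∈ T.erase a,
          Real.logb 2 (Nat.factorial (cnt s b (m+1)) : ℝ)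
            = Real.logb 2 (Nat.factorial (cnt s b m) : ℝ) := by
        intro b hb; rw [hcnt_ne b hb]
      have hcongr2 : ∀ b ∈ T.erase a,
          Real.logb 2 ((cnt s b (m+1) : ℝ))
            = Real.logb 2 ((cnt s b m : ℝ)) := by
        intro b hb; rw [hcnt_ne b hb]
      have e1 : ∑ b ∈ T, Real.logb 2 (Nat.factorial (cnt s b (m+1)) : ℝ)
          = ∑ b ∈ T, Real.logb 2 (Nat.factorial (cnt s b m) : ℝ)
            + Real.logb 2 ((cnt s a m : ℝ) + 1) := by
        rw [← Finset.add_sum_erase T _ hmem,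
            ← Finset.add_sum_erase T
              (fun b => Real.logb 2 (Nat.factorial (cnt s b m) : ℝ)) hmem,
            Finset.sum_congr rfl hcongr1, hcnta, logb_fact_succ]
        ring
      have e2 : ∑ b ∈ T, Real.logb 2 ((cnt s b (m+1) : ℝ))
          = ∑ b ∈ T, Real.logb 2 ((cnt s b m : ℝ))
            + (Real.logb 2 ((cnt s a m : ℝ) + 1)
               - Real.logb 2 ((cnt s a m : ℝ))) := by
        rw [← Finset.add_sum_erase T _ hmem,
            ← Finset.add_sum_erase T
              (fun b => Real.logb 2 ((cnt s b m : ℝ))) hmem,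
            Finset.sum_congr rfl hcongr2, hcnta']
        ring
      have hdiv : Real.logb 2 (((m:ℝ)+1) / (cnt s a m : ℝ))
          = Real.logb 2 ((m:ℝ)+1) - Real.logb 2 ((cnt s a m : ℝ)) :=
        Real.logb_div (by positivity) (ne_of_gt hcpos)
      rw [hrep, Finset.sum_insert hnm, himg', e1, e2, logb_fact_succ]
      simp only [Nat.add_sub_cancel, ← ha]
      push_cast
      rw [hdiv]
      linarith [ih]
    · -- new character: cnt s a m = 0
      have hc0 : cnt s a m = 0 := by
        by_contra h
        exact hmem ((mem_image_iff_cnt s a m).mpr (Nat.one_le_iff_ne_zero.mpr h))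
      have hrep : repSet s (m+1) = repSet s m := by
        rw [repSet_succ, if_neg hmem]
      have hcnta : cnt s a (m+1) = 1 := by rw [cnt_succ, hc0]; simp [ha]
      have hne : ∀ b ∈ T, cnt s b (m+1) = cnt s b m := by
        intro b hb
        refine cnt_succ_ne s b m ?_
        rintro rfl; exact hmem hb
      have hrest1 : ∑ b ∈ T, Real.logb 2 (Nat.factorial (cnt s b (m+1)) : ℝ)
          = ∑ b ∈ T, Real.logb 2 (Nat.factorial (cnt s b m) : ℝ) :=
        Finset.sum_congr rfl fun b hb => by rw [hne b hb]
      have hrest2 : ∑ b ∈ T, Real.logb 2 ((cnt s b (m+1) : ℝ))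
          = ∑ b ∈ T, Real.logb 2 ((cnt s b m : ℝ)) :=
        Finset.sum_congr rfl fun b hb => by rw [hne b hb]
      have hlog : (0:ℝ) ≤ Real.logb 2 ((m:ℝ)+1) := by
        apply Real.logb_nonneg (by norm_num); linarith [Nat.cast_nonneg (α := ℝ) m]
      rw [hrep, himg, Finset.sum_insert hmem, Finset.sum_insert hmem, hcnta,
        hrest1, hrest2, logb_fact_succ]
      simp only [Nat.factorial_one, Nat.cast_one, Real.logb_one]
      linarith [ih]

end aux

theorem stmt_0 {α : Type*} [DecidableEq α] (m : ℕ) (hm : 1 ≤ m) (s : ℕ → α) :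
    ∑ i ∈ repSet s m,
        Real.logb 2 ((i : ℝ) / (cnt s (s i) (i - 1) : ℝ))
      ≤ Real.logb 2 (Nat.factorial m : ℝ)
        - ∑ a ∈ (Finset.Icc 1 m).image s,
            Real.logb 2 (Nat.factorial (cnt s a m) : ℝ)
        + ∑ a ∈ (Finset.Icc 1 m).image s,
            Real.logb 2 (cnt s a m : ℝ) := by
  exact aux_ind s m
end

section
/- Let n ≥ 1 be an integer, let I be a finite nonempty set of positive integers with |I| ≥ n, and let (x_i)_{i∈I} be positive real numbers. Then ∑_{i∈I} log( (i+n) / x_i ) ≤ ∑_{i∈I} log( i / x_i ) + n·log( max I + n ). -/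
open Finset Real

theorem stmt_3 (n : ℕ) (hn : 1 ≤ n) (I : Finset ℕ) (hI : I.Nonempty)
    (hpos : ∀ i ∈ I, 0 < i) (hcard : n ≤ I.card)
    (x : ℕ → ℝ) (hx : ∀ i ∈ I, 0 < x i) :
    ∑ i ∈ I, Real.logb 2 (((i : ℝ) + (n : ℝ)) / x i)
      ≤ ∑ i ∈ I, Real.logb 2 ((i : ℝ) / x i)
        + (n : ℝ) * Real.logb 2 ((I.max' hI : ℝ) + (n : ℝ)) := by
  set M := I.max' hI with hM
  have hnonneg : ∀ k : ℕ, (0:ℝ) ≤ Real.logb 2 k := by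
    intro k
    rcases Nat.eq_zero_or_pos k with h | h
    · simp [h, Real.logb]
    · exact Real.logb_nonneg one_lt_two (by exact_mod_cast h)
  have hmono : ∀ a b : ℕ, a ≤ b → Real.logb 2 (a:ℝ) ≤ Real.logb 2 (b:ℝ) := by
    intro a b hab
    rcases Nat.eq_zero_or_pos a with h | h
    · subst h; simpa using hnonneg b
    · exact Real.logb_le_logb_of_le one_lt_two (by exact_mod_cast h)
        (by exact_mod_cast hab)
  -- split logb of quotients
  have hsplit : ∀ i ∈ I, Real.logb 2 (((i : ℝ) + (n : ℝ)) / x i)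
      = Real.logb 2 ((i : ℝ) / x i)
        + (Real.logb 2 ((i + n : ℕ) : ℝ) - Real.logb 2 (i:ℝ)) := by
    intro i hi
    have hipos : (0:ℝ) < i := by exact_mod_cast hpos i hi
    have hxne : x i ≠ 0 := (hx i hi).ne'
    have h1 : ((i:ℝ) + n) ≠ 0 := by positivity
    rw [Real.logb_div h1 hxne, Real.logb_div hipos.ne' hxne]
    push_cast
    ring
  rw [Finset.sum_congr rfl hsplit, Finset.sum_add_distrib]
  have main : ∑ i ∈ I, (Real.logb 2 ((i + n : ℕ) : ℝ) - Real.logb 2 (i:ℝ))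
      ≤ (n:ℝ) * Real.logb 2 ((M : ℝ) + (n : ℝ)) := by
    have tele : ∀ i : ℕ, Real.logb 2 ((i + n : ℕ) : ℝ) - Real.logb 2 (i:ℝ)
        = ∑ t ∈ Finset.range n,
            (Real.logb 2 ((i + t + 1 : ℕ) : ℝ) - Real.logb 2 ((i + t : ℕ) : ℝ)) := by
      intro i
      have := Finset.sum_range_sub (f := fun t => Real.logb 2 ((i + t : ℕ) : ℝ)) n
      rw [show (∑ t ∈ Finset.range n,
          (Real.logb 2 ((i + t + 1 : ℕ) : ℝ) - Real.logb 2 ((i + t : ℕ) : ℝ)))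
          = ∑ t ∈ Finset.range n,
          ((fun t => Real.logb 2 ((i + t : ℕ) : ℝ)) (t+1)
            - (fun t => Real.logb 2 ((i + t : ℕ) : ℝ)) t) from by
            apply Finset.sum_congr rfl; intro t _; simp [Nat.add_assoc], this]
      simp
    simp only [tele]
    rw [Finset.sum_comm]
    have bound : ∀ t ∈ Finset.range n,
        (∑ i ∈ I, (Real.logb 2 ((i + t + 1 : ℕ) : ℝ) - Real.logb 2 ((i + t : ℕ) : ℝ)))
          ≤ Real.logb 2 ((M : ℝ) + (n : ℝ)) := by
      intro t ht
      have htn : t + 1 ≤ n := Finset.mem_range.mp ht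
      have hsub : I ⊆ Finset.range (M + 1) := by
        intro i hi
        exact Finset.mem_range.mpr (Nat.lt_succ_of_le (I.le_max' i hi))
      have h1 : (∑ i ∈ I, (Real.logb 2 ((i + t + 1 : ℕ) : ℝ) - Real.logb 2 ((i + t : ℕ) : ℝ)))
          ≤ ∑ i ∈ Finset.range (M + 1),
              (Real.logb 2 ((i + t + 1 : ℕ) : ℝ) - Real.logb 2 ((i + t : ℕ) : ℝ)) := by
        apply Finset.sum_le_sum_of_subset_of_nonneg hsub
        intro i _ _
        have := hmono (i + t) (i + t + 1) (Nat.le_succ _)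
        linarith
      have h2 : ∑ i ∈ Finset.range (M + 1),
          (Real.logb 2 ((i + t + 1 : ℕ) : ℝ) - Real.logb 2 ((i + t : ℕ) : ℝ))
          = Real.logb 2 ((M + 1 + t : ℕ) : ℝ) - Real.logb 2 ((t : ℕ) : ℝ) := by
        have := Finset.sum_range_sub (f := fun i => Real.logb 2 ((i + t : ℕ) : ℝ)) (M + 1)
        rw [show (∑ i ∈ Finset.range (M+1),
            (Real.logb 2 ((i + t + 1 : ℕ) : ℝ) - Real.logb 2 ((i + t : ℕ) : ℝ)))
            = ∑ i ∈ Finset.range (M+1),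
            ((fun i => Real.logb 2 ((i + t : ℕ) : ℝ)) (i+1)
              - (fun i => Real.logb 2 ((i + t : ℕ) : ℝ)) i) from by
              apply Finset.sum_congr rfl; intro i _
              simp only
              have hiq : i + 1 + t = i + t + 1 := by omega
              rw [hiq], this]
        simp
      rw [h2] at h1
      have h3 : Real.logb 2 ((M + 1 + t : ℕ) : ℝ) ≤ Real.logb 2 ((M + n : ℕ) : ℝ) :=
        hmono _ _ (by omega)
      have h4 : (0:ℝ) ≤ Real.logb 2 ((t : ℕ) : ℝ) := hnonneg t
      have h5 : ((M + n : ℕ) : ℝ) = (M : ℝ) + (n : ℝ) := by push_cast; ring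
      rw [h5] at h3
      linarith
    calc ∑ t ∈ Finset.range n, ∑ i ∈ I,
          (Real.logb 2 ((i + t + 1 : ℕ) : ℝ) - Real.logb 2 ((i + t : ℕ) : ℝ))
        ≤ ∑ t ∈ Finset.range n, Real.logb 2 ((M : ℝ) + (n : ℝ)) :=
          Finset.sum_le_sum bound
      _ = (n:ℝ) * Real.logb 2 ((M : ℝ) + (n : ℝ)) := by
          rw [Finset.sum_const, Finset.card_range, nsmul_eq_mul]
  linarith
end

section
/- Let S = s_1⋯s_m be a string over an alphabet of size n with m ≥ n ≥ 1, let R = {i : 1 ≤ i ≤ m, s_i ∈ {s_1,…,s_{i−1}}}, and suppose |R| ≥ n. Then ∑_{i∈R} ⌈log( (i+n) / #_{s_i}(s_1⋯s_{i−1}) )⌉ ≤ (H+1)·m + (n+1)·log m + n·log(m+n) + 2. -/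
open Finset

/-- The empirical entropy `H = ∑_{a ∈ S} (#_a(S)/m) · log(m/#_a(S))` of the
string `s 1 ⋯ s m`, with the sum over the distinct characters occurring in it. -/
noncomputable def entropy {α : Type*} [DecidableEq α] (s : ℕ → α) (m : ℕ) : ℝ :=
  ∑ a ∈ (Finset.Icc 1 m).image s,
    ((cnt s a m : ℝ) / (m : ℝ)) * Real.logb 2 ((m : ℝ) / (cnt s a m : ℝ))

namespace StmtAux

lemma Icc_one_succ (k : ℕ) : Finset.Icc 1 (k+1) = insert (k+1) (Finset.Icc 1 k) := by
  rw [← Finset.Ico_add_one_right_eq_Icc, ← Finset.Ico_add_one_right_eq_Icc,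
    ]
  exact Nat.Ico_succ_right_eq_insert_Ico (by omega)

lemma Icc_two_succ (k : ℕ) (hk : 1 ≤ k) :
    Finset.Icc 2 (k+1) = insert (k+1) (Finset.Icc 2 k) := by
  rw [← Finset.Ico_add_one_right_eq_Icc, ← Finset.Ico_add_one_right_eq_Icc,
    ]
  exact Nat.Ico_succ_right_eq_insert_Ico (by omega)

variable {α : Type*} [DecidableEq α] (s : ℕ → α)

lemma cnt_mono (a : α) : Monotone (cnt s a) := fun i j hij =>
  Finset.card_le_card (Finset.filter_subset_filter _ (Finset.Icc_subset_Icc_right hij))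

lemma cnt_succ (a : α) {j : ℕ} (hj : 1 ≤ j) (h : s j = a) :
    cnt s a j = cnt s a (j-1) + 1 := by
  obtain ⟨k, rfl⟩ : ∃ k, j = k + 1 := ⟨j - 1, by omega⟩
  unfold cnt
  rw [Icc_one_succ, Finset.filter_insert, if_pos h,
    Finset.card_insert_of_notMem (by simp)]
  simp

lemma cnt_pos_of (a : α) {i : ℕ} (hi : 1 ≤ i) (h : s i = a) : 1 ≤ cnt s a i := by
  have : i ∈ (Finset.Icc 1 i).filter (fun j => s j = a) := by
    simp [h, hi]
  exact Finset.card_pos.2 ⟨i, this⟩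

lemma cnt_le (a : α) (i : ℕ) : cnt s a i ≤ i := by
  calc cnt s a i ≤ (Finset.Icc 1 i).card := Finset.card_filter_le _ _
  _ = i := by simp

lemma mem_repSet_iff (m i : ℕ) :
    i ∈ repSet s m ↔ i ∈ Finset.Icc 1 m ∧ 1 ≤ cnt s (s i) (i-1) := by
  unfold repSet cnt
  rw [Finset.mem_filter]
  constructor
  · rintro ⟨h1, h2⟩
    refine ⟨h1, Finset.card_pos.2 ?_⟩
    rw [Finset.filter_nonempty_iff]
    simpa [eq_comm] using h2
  · rintro ⟨h1, h2⟩
    refine ⟨h1, ?_⟩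
    have h3 := Finset.filter_nonempty_iff.1 (Finset.card_pos.1 h2)
    simpa [eq_comm] using h3

lemma sum_logb_Icc (f : ℕ) :
    ∑ k ∈ Finset.Icc 2 f, Real.logb 2 ((k:ℝ)-1)
      = Real.logb 2 ((f-1).factorial : ℝ) := by
  induction f with
  | zero => simp
  | succ f ih =>
    rcases Nat.lt_or_ge f 1 with h | h
    · interval_cases f
      simp
    · rw [Icc_two_succ f h, Finset.sum_insert (by simp), ih]
      have h1 : ((f+1:ℕ):ℝ) - 1 = (f:ℝ) := by push_cast; ring
      have h2 : (f + 1 - 1 : ℕ) = f := by omega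
      rw [h1, h2]
      have h3 : (f : ℝ) ≠ 0 := by
        have : 0 < f := h
        positivity
      have h4 : ((f-1).factorial : ℝ) ≠ 0 := by positivity
      rw [← Real.logb_mul h3 h4]
      congr 1
      rw [← Nat.cast_mul, Nat.mul_factorial_pred (by omega)]
      

lemma logb_prod {β : Type*} (t : Finset β) (g : β → ℝ) (h : ∀ i ∈ t, g i ≠ 0) :
    Real.logb 2 (∏ i ∈ t, g i) = ∑ i ∈ t, Real.logb 2 (g i) := by
  simp only [Real.logb, Real.log_prod h, Finset.sum_div]

lemma cnt_strictmono (a : α) {i j : ℕ} (hij : i < j) (hj : s j = a) :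
    cnt s a i < cnt s a j := by
  have h1 : cnt s a i ≤ cnt s a (j-1) := cnt_mono s a (by omega)
  have h2 := cnt_succ s a (by omega : 1 ≤ j) hj
  omega

lemma sum_logb_cnt (m : ℕ) (a : α) :
    ∑ i ∈ (repSet s m).filter (fun i => s i = a),
        Real.logb 2 (cnt s (s i) (i-1) : ℝ)
      = Real.logb 2 ((cnt s a m - 1).factorial : ℝ) := by
  classical
  set occ := (Finset.Icc 1 m).filter (fun i => s i = a) with hocc
  have hinj : ∀ x ∈ occ, ∀ y ∈ occ, cnt s a x = cnt s a y → x = y := by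
    intro x hx y hy hxy
    simp only [hocc, Finset.mem_filter] at hx hy
    rcases lt_trichotomy x y with h | h | h
    · exact absurd hxy (cnt_strictmono s a h hy.2).ne
    · exact h
    · exact absurd hxy.symm (cnt_strictmono s a h hx.2).ne
  have hcard : occ.card = cnt s a m := rfl
  have himg : occ.image (cnt s a) = Finset.Icc 1 (cnt s a m) := by
    apply Finset.eq_of_subset_of_card_le
    · intro k hk
      obtain ⟨i, hi, rfl⟩ := Finset.mem_image.1 hk
      simp only [hocc, Finset.mem_filter, Finset.mem_Icc] at hi
      rw [Finset.mem_Icc]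
      exact ⟨cnt_pos_of s a hi.1.1 hi.2, cnt_mono s a hi.1.2⟩
    · rw [Nat.card_Icc, Finset.card_image_of_injOn hinj, hcard]
      omega
  have hfilter : (repSet s m).filter (fun i => s i = a)
      = occ.filter (fun i => 2 ≤ cnt s a i) := by
    ext i
    simp only [Finset.mem_filter, mem_repSet_iff, hocc]
    constructor
    · rintro ⟨⟨h1, h2⟩, h3⟩
      have hi1 : 1 ≤ i := (Finset.mem_Icc.1 h1).1
      refine ⟨⟨h1, h3⟩, ?_⟩
      rw [cnt_succ s a hi1 h3, ← h3]
      omega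
    · rintro ⟨⟨h1, h3⟩, h2⟩
      have hi1 : 1 ≤ i := (Finset.mem_Icc.1 h1).1
      refine ⟨⟨h1, ?_⟩, h3⟩
      rw [h3]
      have := cnt_succ s a hi1 h3
      omega
  rw [hfilter]
  have step1 : ∑ i ∈ occ.filter (fun i => 2 ≤ cnt s a i),
      Real.logb 2 (cnt s (s i) (i-1) : ℝ)
      = ∑ i ∈ occ.filter (fun i => 2 ≤ cnt s a i),
          Real.logb 2 ((cnt s a i : ℝ) - 1) := by
    apply Finset.sum_congr rfl
    intro i hi
    simp only [hocc, Finset.mem_filter, Finset.mem_Icc] at hi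
    obtain ⟨⟨⟨hi1, _⟩, hsa⟩, h2⟩ := hi
    rw [hsa]
    have hcs := cnt_succ s a hi1 hsa
    have : cnt s a (i-1) = cnt s a i - 1 := by omega
    rw [this]
    congr 1
    push_cast [Nat.cast_sub (by omega : 1 ≤ cnt s a i)]
    ring
  rw [step1]
  have step2 : ∑ i ∈ occ.filter (fun i => 2 ≤ cnt s a i),
      Real.logb 2 ((cnt s a i : ℝ) - 1)
      = ∑ k ∈ (occ.filter (fun i => 2 ≤ cnt s a i)).image (cnt s a),
          Real.logb 2 ((k : ℝ) - 1) := by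
    rw [Finset.sum_image]
    intro x hx y hy
    exact hinj x (Finset.filter_subset _ _ hx) y (Finset.filter_subset _ _ hy)
  rw [step2]
  have step3 : (occ.filter (fun i => 2 ≤ cnt s a i)).image (cnt s a)
      = Finset.Icc 2 (cnt s a m) := by
    rw [← Finset.filter_image, himg]
    ext k
    simp only [Finset.mem_filter, Finset.mem_Icc]
    omega
  rw [step3, sum_logb_Icc]

lemma sum_logb_cnt_total (m : ℕ) :
    ∑ i ∈ repSet s m, Real.logb 2 (cnt s (s i) (i-1) : ℝ)
      = ∑ a ∈ (Finset.Icc 1 m).image s,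
          Real.logb 2 ((cnt s a m - 1).factorial : ℝ) := by
  classical
  rw [← Finset.sum_fiberwise_of_maps_to (s := repSet s m) (g := s)
      (t := (Finset.Icc 1 m).image s)
      (fun i hi => Finset.mem_image_of_mem s ((mem_repSet_iff s m i).1 hi).1)]
  exact Finset.sum_congr rfl fun a _ => sum_logb_cnt s m a

lemma prod_Icc_add (m n : ℕ) :
    (∏ i ∈ Finset.Icc 1 m, (i+n)) * n.factorial = (m+n).factorial := by
  induction m with
  | zero => simp
  | succ m ih =>
    rw [Icc_one_succ, Finset.prod_insert (by simp), mul_assoc, ih]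
    have : m + 1 + n = (m + n) + 1 := by omega
    rw [this, Nat.factorial_succ]

lemma factorial_add_le (m n : ℕ) : (m+n).factorial ≤ (m+n)^n * m.factorial := by
  induction n with
  | zero => simp
  | succ n ih =>
    have h1 : m + (n+1) = (m+n) + 1 := by omega
    rw [h1, Nat.factorial_succ]
    calc (m+n+1) * (m+n).factorial ≤ (m+n+1) * ((m+n)^n * m.factorial) :=
          Nat.mul_le_mul_left _ ih
      _ ≤ (m+n+1) * ((m+n+1)^n * m.factorial) := by
          refine Nat.mul_le_mul_left _ (Nat.mul_le_mul_right _ ?_)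
          exact Nat.pow_le_pow_left (by omega) n
      _ = (m+n+1)^(n+1) * m.factorial := by ring

lemma choose_bound (M g : ℕ) : (M+g).choose g * M^M * g^g ≤ (M+g)^(M+g) := by
  calc (M+g).choose g * M^M * g^g = g^g * M^((M+g)-g) * (M+g).choose g := by
        rw [Nat.add_sub_cancel]; ring
    _ ≤ ∑ k ∈ Finset.range (M+g+1), g^k * M^((M+g)-k) * (M+g).choose k :=
        Finset.single_le_sum (f := fun k => g^k * M^((M+g)-k) * (M+g).choose k)
          (fun k _ => Nat.zero_le _) (a := g) (Finset.mem_range.2 (by omega))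
    _ = (g+M)^(M+g) := (add_pow g M (M+g)).symm
    _ = (M+g)^(M+g) := by rw [add_comm g M]

lemma multinomial_bound {β : Type*} [DecidableEq β] (T : Finset β) (f : β → ℕ) :
    (∑ a ∈ T, f a).factorial * ∏ a ∈ T, (f a)^(f a)
      ≤ (∑ a ∈ T, f a)^(∑ a ∈ T, f a) * ∏ a ∈ T, (f a).factorial := by
  classical
  induction T using Finset.induction_on with
  | empty => simp
  | insert _ _ hb ih =>
    rename_i b T'
    rw [Finset.sum_insert hb, Finset.prod_insert hb, Finset.prod_insert hb]
    set M := ∑ x ∈ T', f x with hM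
    set g := f b with hg
    rw [add_comm g M]
    have e1 : (M+g).factorial = (M+g).choose g * M.factorial * g.factorial :=
      (Nat.add_choose_mul_factorial_mul_factorial M g).symm
    calc (M+g).factorial * (g^g * ∏ x ∈ T', (f x)^(f x))
        = ((M+g).choose g * g.factorial * g^g)
            * (M.factorial * ∏ x ∈ T', (f x)^(f x)) := by rw [e1]; ring
      _ ≤ ((M+g).choose g * g.factorial * g^g)
            * (M^M * ∏ x ∈ T', (f x).factorial) := Nat.mul_le_mul_left _ ih
      _ = ((M+g).choose g * M^M * g^g)
            * (g.factorial * ∏ x ∈ T', (f x).factorial) := by ring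
      _ ≤ (M+g)^(M+g) * (g.factorial * ∏ x ∈ T', (f x).factorial) :=
          Nat.mul_le_mul_right _ (choose_bound M g)

end StmtAux

open StmtAux in
theorem stmt_4 (n m : ℕ) (hn : 1 ≤ n) (hm : n ≤ m) (s : ℕ → Fin n)
    (hR : n ≤ (repSet s m).card) :
    ∑ i ∈ repSet s m,
        (⌈Real.logb 2 (((i : ℝ) + (n : ℝ)) / (cnt s (s i) (i - 1) : ℝ))⌉ : ℝ)
      ≤ (entropy s m + 1) * m + ((n : ℝ) + 1) * Real.logb 2 (m : ℝ)
        + (n : ℝ) * Real.logb 2 ((m : ℝ) + (n : ℝ)) + 2 := by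
  classical
  have hm1 : 1 ≤ m := le_trans hn hm
  have hmpos : (0:ℝ) < (m:ℝ) := by exact_mod_cast hm1
  have hnpos : (0:ℝ) < (n:ℝ) := by exact_mod_cast hn
  set A := (Finset.Icc 1 m).image s with hA
  set R := repSet s m with hRdef
  have hRsub : R ⊆ Finset.Icc 1 m := fun i hi => ((mem_repSet_iff s m i).1 hi).1
  have hRcard : (R.card : ℝ) ≤ (m:ℝ) := by
    have h := Finset.card_le_card hRsub
    rw [Nat.card_Icc] at h
    exact_mod_cast (by omega : R.card ≤ m)
  have hFpos : ∀ a ∈ A, 1 ≤ cnt s a m := by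
    intro a ha
    obtain ⟨j, hj, rfl⟩ := Finset.mem_image.1 ha
    rw [Finset.mem_Icc] at hj
    exact le_trans (cnt_pos_of s (s j) hj.1 rfl) (cnt_mono s (s j) hj.2)
  have hsumF : ∑ a ∈ A, cnt s a m = m := by
    have h := Finset.card_eq_sum_card_image s (Finset.Icc 1 m)
    rw [Nat.card_Icc] at h
    have : m + 1 - 1 = m := by omega
    rw [this] at h
    exact h.symm
  -- Step A+B : ceiling and split of logb of quotient
  have stepA : ∑ i ∈ R, (⌈Real.logb 2 (((i : ℝ) + (n : ℝ)) / (cnt s (s i) (i - 1) : ℝ))⌉ : ℝ)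
      ≤ ∑ i ∈ R, (Real.logb 2 ((i:ℝ)+(n:ℝ)) - Real.logb 2 (cnt s (s i) (i-1) : ℝ) + 1) := by
    apply Finset.sum_le_sum
    intro i hi
    obtain ⟨h1, h2⟩ := (mem_repSet_iff s m i).1 hi
    have hi1 : 1 ≤ i := (Finset.mem_Icc.1 h1).1
    have hipos : (0:ℝ) < (i:ℝ) := by exact_mod_cast hi1
    have hsplit : Real.logb 2 (((i : ℝ) + (n : ℝ)) / (cnt s (s i) (i - 1) : ℝ))
        = Real.logb 2 ((i:ℝ)+(n:ℝ)) - Real.logb 2 (cnt s (s i) (i-1) : ℝ) :=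
      Real.logb_div (by positivity) (Nat.cast_ne_zero.2 (by omega))
    rw [← hsplit]
    exact (Int.ceil_lt_add_one _).le
  have stepA' : ∑ i ∈ R, (Real.logb 2 ((i:ℝ)+(n:ℝ)) - Real.logb 2 (cnt s (s i) (i-1) : ℝ) + 1)
      = ∑ i ∈ R, Real.logb 2 ((i:ℝ)+(n:ℝ)) - ∑ i ∈ R, Real.logb 2 (cnt s (s i) (i-1) : ℝ)
        + (R.card : ℝ) := by
    rw [Finset.sum_add_distrib, Finset.sum_sub_distrib, Finset.sum_const, nsmul_eq_mul, mul_one]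
  -- Step C : bound on sum of logb (i+n)
  have stepC : ∑ i ∈ R, Real.logb 2 ((i:ℝ)+(n:ℝ))
      ≤ (n:ℝ) * Real.logb 2 ((m:ℝ)+(n:ℝ)) + Real.logb 2 (m.factorial : ℝ) := by
    have hC1 : ∑ i ∈ R, Real.logb 2 ((i:ℝ)+(n:ℝ))
        ≤ ∑ i ∈ Finset.Icc 1 m, Real.logb 2 ((i:ℝ)+(n:ℝ)) := by
      apply Finset.sum_le_sum_of_subset_of_nonneg hRsub
      intro i _ _
      apply Real.logb_nonneg one_lt_two
      have : (1:ℝ) ≤ (n:ℝ) := by exact_mod_cast hn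
      have hi0 : (0:ℝ) ≤ (i:ℝ) := by positivity
      linarith
    have hC2 : ∑ i ∈ Finset.Icc 1 m, Real.logb 2 ((i:ℝ)+(n:ℝ))
        = Real.logb 2 ((∏ i ∈ Finset.Icc 1 m, (i+n) : ℕ) : ℝ) := by
      rw [Nat.cast_prod, logb_prod _ _ (fun i _ => by positivity)]
      apply Finset.sum_congr rfl
      intro i _
      norm_cast
    have hC3 : (∏ i ∈ Finset.Icc 1 m, (i+n)) ≤ (m+n)^n * m.factorial := by
      calc (∏ i ∈ Finset.Icc 1 m, (i+n))
          ≤ (∏ i ∈ Finset.Icc 1 m, (i+n)) * n.factorial :=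
            Nat.le_mul_of_pos_right _ n.factorial_pos
        _ = (m+n).factorial := prod_Icc_add m n
        _ ≤ (m+n)^n * m.factorial := factorial_add_le m n
    have hprodpos : 0 < ∏ i ∈ Finset.Icc 1 m, (i+n) :=
      Finset.prod_pos fun i _ => by omega
    have hC4 : Real.logb 2 ((∏ i ∈ Finset.Icc 1 m, (i+n) : ℕ) : ℝ)
        ≤ Real.logb 2 (((m+n)^n * m.factorial : ℕ) : ℝ) :=
      Real.logb_le_logb_of_le one_lt_two (by exact_mod_cast hprodpos) (by exact_mod_cast hC3)
    have hC5 : Real.logb 2 (((m+n)^n * m.factorial : ℕ) : ℝ)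
        = (n:ℝ) * Real.logb 2 ((m:ℝ)+(n:ℝ)) + Real.logb 2 (m.factorial : ℝ) := by
      push_cast
      rw [Real.logb_mul (by positivity) (by positivity), Real.logb_pow]
    linarith
  -- Step D : per-character evaluation of sum of logb cnt
  have stepD : ∑ i ∈ R, Real.logb 2 (cnt s (s i) (i-1) : ℝ)
      = ∑ a ∈ A, Real.logb 2 ((cnt s a m).factorial : ℝ)
        - ∑ a ∈ A, Real.logb 2 (cnt s a m : ℝ) := by
    rw [hRdef, sum_logb_cnt_total, ← Finset.sum_sub_distrib]
    apply Finset.sum_congr rfl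
    intro a ha
    have h1 : 1 ≤ cnt s a m := hFpos a ha
    have hc : (cnt s a m : ℝ) ≠ 0 := Nat.cast_ne_zero.2 (by omega)
    have hf : ((cnt s a m - 1).factorial : ℝ) ≠ 0 := by positivity
    have hmul : (cnt s a m : ℝ) * ((cnt s a m - 1).factorial : ℝ)
        = ((cnt s a m).factorial : ℝ) := by
      rw [← Nat.cast_mul, Nat.mul_factorial_pred (by omega)]
    have := Real.logb_mul hc hf (b := 2)
    rw [hmul] at this
    linarith
  -- Step E : sum of logb F bounded
  have stepE : ∑ a ∈ A, Real.logb 2 (cnt s a m : ℝ) ≤ (n:ℝ) * Real.logb 2 (m:ℝ) := by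
    have hlogm : 0 ≤ Real.logb 2 (m:ℝ) := Real.logb_nonneg one_lt_two (by exact_mod_cast hm1)
    have hcardA : (A.card : ℝ) ≤ (n:ℝ) := by
      have := Finset.card_le_univ A
      simp only [Finset.card_univ, Fintype.card_fin] at this
      exact_mod_cast this
    calc ∑ a ∈ A, Real.logb 2 (cnt s a m : ℝ)
        ≤ A.card • Real.logb 2 (m:ℝ) := by
          apply Finset.sum_le_card_nsmul
          intro a ha
          apply Real.logb_le_logb_of_le one_lt_two
          · exact_mod_cast hFpos a ha
          · exact_mod_cast cnt_le s a m
      _ = (A.card : ℝ) * Real.logb 2 (m:ℝ) := by rw [nsmul_eq_mul]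
      _ ≤ (n:ℝ) * Real.logb 2 (m:ℝ) := mul_le_mul_of_nonneg_right hcardA hlogm
  -- Step F : multinomial bound, real version
  have stepF : Real.logb 2 (m.factorial : ℝ) + ∑ a ∈ A, (cnt s a m : ℝ) * Real.logb 2 (cnt s a m : ℝ)
      ≤ (m:ℝ) * Real.logb 2 (m:ℝ) + ∑ a ∈ A, Real.logb 2 ((cnt s a m).factorial : ℝ) := by
    have hNat : m.factorial * ∏ a ∈ A, (cnt s a m)^(cnt s a m)
        ≤ m^m * ∏ a ∈ A, (cnt s a m).factorial := by
      have h := multinomial_bound A (fun a => cnt s a m)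
      rwa [hsumF] at h
    have hposL : 0 < m.factorial * ∏ a ∈ A, (cnt s a m)^(cnt s a m) :=
      Nat.mul_pos m.factorial_pos
        (Finset.prod_pos fun a ha => Nat.pow_pos (hFpos a ha))
    have hlog := Real.logb_le_logb_of_le (b := 2)
      (x := ((m.factorial * ∏ a ∈ A, (cnt s a m)^(cnt s a m) : ℕ) : ℝ))
      (y := ((m^m * ∏ a ∈ A, (cnt s a m).factorial : ℕ) : ℝ))
      one_lt_two (by exact_mod_cast hposL) (by exact_mod_cast hNat)
    push_cast at hlog
    rw [Real.logb_mul (by positivity)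
          (Finset.prod_ne_zero_iff.2 fun a ha => by
            have h1 : 1 ≤ cnt s a m := hFpos a ha
            have : (0:ℝ) < (cnt s a m : ℝ) := by exact_mod_cast h1
            positivity),
        Real.logb_mul (by positivity)
          (Finset.prod_ne_zero_iff.2 fun a _ => by positivity),
        logb_prod _ _ (fun a ha => by
            have h1 : 1 ≤ cnt s a m := hFpos a ha
            have : (0:ℝ) < (cnt s a m : ℝ) := by exact_mod_cast h1
            positivity),
        logb_prod _ _ (fun a _ => by positivity),
        Real.logb_pow] at hlog
    simp only [Real.logb_pow] at hlog
    linarith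
  -- Step G : entropy identity
  have stepG : entropy s m * (m:ℝ)
      = (m:ℝ) * Real.logb 2 (m:ℝ) - ∑ a ∈ A, (cnt s a m : ℝ) * Real.logb 2 (cnt s a m : ℝ) := by
    unfold entropy
    rw [← hA, Finset.sum_mul]
    have hterm : ∀ a ∈ A, ((cnt s a m : ℝ) / (m:ℝ) * Real.logb 2 ((m:ℝ)/(cnt s a m : ℝ))) * (m:ℝ)
        = (cnt s a m : ℝ) * Real.logb 2 (m:ℝ) - (cnt s a m : ℝ) * Real.logb 2 (cnt s a m : ℝ) := by
      intro a ha
      have h1 : 1 ≤ cnt s a m := hFpos a ha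
      have hc : (cnt s a m : ℝ) ≠ 0 := Nat.cast_ne_zero.2 (by omega)
      have hm0 : (m:ℝ) ≠ 0 := ne_of_gt hmpos
      rw [Real.logb_div hm0 hc]
      field_simp
    rw [Finset.sum_congr rfl hterm, Finset.sum_sub_distrib, ← Finset.sum_mul]
    have hcast : (∑ a ∈ A, (cnt s a m : ℝ)) = (m:ℝ) := by
      rw [← Nat.cast_sum]
      exact_mod_cast congrArg (Nat.cast : ℕ → ℝ) hsumF
    rw [hcast]
  -- Final assembly
  have hlogm : 0 ≤ Real.logb 2 (m:ℝ) := Real.logb_nonneg one_lt_two (by exact_mod_cast hm1)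
  have hring1 : (entropy s m + 1) * (m:ℝ) = entropy s m * (m:ℝ) + (m:ℝ) := by ring
  have hring2 : ((n:ℝ)+1) * Real.logb 2 (m:ℝ)
      = (n:ℝ) * Real.logb 2 (m:ℝ) + Real.logb 2 (m:ℝ) := by ring
  linarith
end

section
/- Let ℓ ≥ 1 be an integer, let S = s_1⋯s_m be a string over an alphabet of size n with m ≥ n ≥ 1, let R = {i : 1 ≤ i ≤ m, s_i ∈ {s_1,…,s_{i−1}}} with |R| ≥ n, and for i ∈ R put w_i = ⌈log( 2^ℓ / ( (2^ℓ − 1)·#_{s_i}(s_1⋯s_{i−1})/(i+n) + 1/n ) )⌉. Then (a) w_i ≤ ⌈log n⌉ + ℓ for every i ∈ R, and (b) ∑_{i∈R} w_i ≤ ( H + 1 + 1/((2^ℓ − 1)·ln 2) )·m + (n+1)·log m + n·log(m+n) + 2. -/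
section Aux
open Finset
variable {α : Type*} [DecidableEq α] (s : ℕ → α) (a : α)

lemma cnt_mono {i j : ℕ} (h : i ≤ j) : cnt s a i ≤ cnt s a j := by
  apply Finset.card_le_card
  exact Finset.filter_subset_filter _ (Finset.Icc_subset_Icc_right h)

lemma cnt_succ_of_eq {i : ℕ} (hi : 1 ≤ i) (h : s i = a) :
    cnt s a i = cnt s a (i-1) + 1 := by
  unfold cnt
  have : Finset.Icc 1 i = insert i (Finset.Icc 1 (i-1)) := by
    ext j
    simp only [Finset.mem_Icc, Finset.mem_insert]
    omega
  rw [this, Finset.filter_insert, if_pos h, Finset.card_insert_of_notMem]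
  simp only [Finset.mem_filter, Finset.mem_Icc]
  omega

lemma cnt_succ_of_ne {i : ℕ} (hi : 1 ≤ i) (h : s i ≠ a) :
    cnt s a i = cnt s a (i-1) := by
  unfold cnt
  have : Finset.Icc 1 i = insert i (Finset.Icc 1 (i-1)) := by
    ext j
    simp only [Finset.mem_Icc, Finset.mem_insert]
    omega
  rw [this, Finset.filter_insert, if_neg h]

lemma cnt_pos_of_occ {i : ℕ} (hi : 1 ≤ i) (h : s i = a) : 1 ≤ cnt s a i := by
  rw [cnt_succ_of_eq s a hi h]; omega

lemma mem_repSet_iff {m i : ℕ} :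
    i ∈ repSet s m ↔ (1 ≤ i ∧ i ≤ m) ∧ 1 ≤ cnt s (s i) (i-1) := by
  unfold repSet cnt
  simp only [Finset.mem_filter, Finset.mem_Icc, Finset.mem_image]
  constructor
  · rintro ⟨h1, j, hj, hsj⟩
    refine ⟨h1, Finset.card_pos.2 ⟨j, ?_⟩⟩
    simp only [Finset.mem_filter, Finset.mem_Icc]
    exact ⟨hj, hsj⟩
  · rintro ⟨h1, h2⟩
    obtain ⟨j, hj⟩ := Finset.card_pos.1 h2
    simp only [Finset.mem_filter, Finset.mem_Icc] at hj
    exact ⟨h1, j, hj.1, hj.2⟩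

lemma occ_injOn {m : ℕ} : ∀ i ∈ (Finset.Icc 1 m).filter (fun i => s i = a),
    ∀ j ∈ (Finset.Icc 1 m).filter (fun i => s i = a),
    cnt s a i = cnt s a j → i = j := by
  have key : ∀ i j : ℕ, 1 ≤ i → i < j → s j = a → cnt s a i < cnt s a j := by
    intro i j hi hij hj
    have h1 : cnt s a i ≤ cnt s a (j-1) := cnt_mono s a (by omega)
    have h2 : cnt s a j = cnt s a (j-1) + 1 := cnt_succ_of_eq s a (by omega) hj
    omega
  intro i hi j hj hc
  simp only [Finset.mem_filter, Finset.mem_Icc] at hi hj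
  by_contra hne
  rcases Nat.lt_or_ge i j with h | h
  · exact absurd hc (Nat.ne_of_lt (key i j hi.1.1 h hj.2))
  · have : j < i := by omega
    exact absurd hc.symm (Nat.ne_of_lt (key j i hj.1.1 this hi.2))

lemma occ_image {m : ℕ} (hm : 1 ≤ m) :
    ((Finset.Icc 1 m).filter (fun i => s i = a)).image (fun i => cnt s a i)
      = Finset.Icc 1 (cnt s a m) := by
  apply Finset.eq_of_subset_of_card_le
  · intro t ht
    simp only [Finset.mem_image, Finset.mem_filter, Finset.mem_Icc] at ht
    obtain ⟨i, ⟨⟨hi1, hi2⟩, hia⟩, rfl⟩ := ht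
    exact Finset.mem_Icc.2 ⟨cnt_pos_of_occ s a hi1 hia, cnt_mono s a hi2⟩
  · rw [Finset.card_image_of_injOn (fun i hi j hj => occ_injOn s a i hi j hj)]
    simp [cnt, Nat.Icc_eq_range']

lemma occ_sum_transfer {m : ℕ} (hm : 1 ≤ m) (g : ℕ → ℝ) :
    ∑ i ∈ (Finset.Icc 1 m).filter (fun i => s i = a), g (cnt s a i)
      = ∑ t ∈ Finset.Icc 1 (cnt s a m), g t := by
  rw [← occ_image s a hm, Finset.sum_image (occ_injOn s a)]

lemma repSet_fiber {m : ℕ} :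
    (repSet s m).filter (fun i => s i = a)
      = ((Finset.Icc 1 m).filter (fun i => s i = a)).filter (fun i => 2 ≤ cnt s a i) := by
  ext i
  simp only [Finset.mem_filter, Finset.mem_Icc]
  constructor
  · rintro ⟨hi, ha⟩
    rw [mem_repSet_iff] at hi
    obtain ⟨⟨h1, h2⟩, h3⟩ := hi
    rw [ha] at h3
    have := cnt_succ_of_eq s a h1 ha
    exact ⟨⟨⟨h1, h2⟩, ha⟩, by omega⟩
  · rintro ⟨⟨⟨h1, h2⟩, ha⟩, h3⟩
    have := cnt_succ_of_eq s a h1 ha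
    refine ⟨(mem_repSet_iff s).2 ⟨⟨h1, h2⟩, ?_⟩, ha⟩
    rw [ha]; omega

lemma repSet_fiber_sum {m : ℕ} (hm : 1 ≤ m) (g : ℕ → ℝ) :
    ∑ i ∈ (repSet s m).filter (fun i => s i = a), g (cnt s a (i-1))
      = ∑ t ∈ Finset.Icc 1 (cnt s a m - 1), g t := by
  rw [repSet_fiber]
  have step2 := occ_sum_transfer s a hm (fun t => if 2 ≤ t then g (t-1) else 0)
  have step1 : ∑ i ∈ ((Finset.Icc 1 m).filter (fun i => s i = a)).filter
        (fun i => 2 ≤ cnt s a i), g (cnt s a (i-1))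
      = ∑ i ∈ (Finset.Icc 1 m).filter (fun i => s i = a),
          (if 2 ≤ cnt s a i then g (cnt s a i - 1) else 0) := by
    rw [Finset.sum_filter]
    apply Finset.sum_congr rfl
    intro i hi
    simp only [Finset.mem_filter, Finset.mem_Icc] at hi
    have := cnt_succ_of_eq s a hi.1.1 hi.2
    by_cases h : 2 ≤ cnt s a i
    · rw [if_pos h, if_pos h]
      congr 1
      omega
    · rw [if_neg h, if_neg h]
  rw [step1, step2, ← Finset.sum_filter]
  have himg : (Finset.Icc 1 (cnt s a m)).filter (fun t => 2 ≤ t)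
      = (Finset.Icc 1 (cnt s a m - 1)).image (fun u => u + 1) := by
    ext t
    simp only [Finset.mem_filter, Finset.mem_Icc, Finset.mem_image]
    constructor
    · rintro ⟨⟨h1, h2⟩, h3⟩; exact ⟨t - 1, by omega, by omega⟩
    · rintro ⟨u, hu, rfl⟩; omega
  rw [himg, Finset.sum_image (by intro x _ y _ h; simp only at h; omega)]
  simp

lemma log_factorial (k : ℕ) :
    Real.log (Nat.factorial k) = ∑ t ∈ Finset.Icc 1 k, Real.log t := by
  induction k with
  | zero => simp [Nat.factorial]
  | succ k ih =>
    have : Finset.Icc 1 (k+1) = insert (k+1) (Finset.Icc 1 k) := by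
      ext j; simp only [Finset.mem_Icc, Finset.mem_insert]; omega
    rw [this, Finset.sum_insert (by simp), ← ih, Nat.factorial_succ]
    push_cast
    rw [Real.log_mul (by positivity) (by positivity)]

lemma stirling_lower : ∀ k : ℕ, 1 ≤ k →
    (k:ℝ) * Real.log k - k + 1 ≤ Real.log (Nat.factorial k) := by
  intro k
  induction k with
  | zero => omega
  | succ k ih =>
    intro _
    rcases Nat.eq_or_lt_of_le (Nat.one_le_iff_ne_zero.2 (Nat.succ_ne_zero k)) with h | h
    · have hk0 : k = 0 := by omega
      subst hk0
      norm_num [Nat.factorial]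
    have hk : 1 ≤ k := by omega
    have ihk := ih hk
    have hkpos : (0:ℝ) < k := by positivity
    have hk1pos : (0:ℝ) < (k:ℝ) + 1 := by positivity
    have key : ((k:ℝ)+1) * Real.log ((k:ℝ)+1) - (k:ℝ) * Real.log k ≤ 1 + Real.log ((k:ℝ)+1) := by
      have h1 : Real.log ((k:ℝ)+1) - Real.log k = Real.log (((k:ℝ)+1)/k) :=
        (Real.log_div (by positivity) (by positivity)).symm
      have h2 : Real.log (((k:ℝ)+1)/k) ≤ ((k:ℝ)+1)/k - 1 :=
        Real.log_le_sub_one_of_pos (by positivity)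
      have h3 : ((k:ℝ)+1)/k - 1 = 1/k := by field_simp; ring
      have h4 : (k:ℝ) * (Real.log ((k:ℝ)+1) - Real.log k) ≤ 1 := by
        rw [h1]
        calc (k:ℝ) * Real.log (((k:ℝ)+1)/k) ≤ (k:ℝ) * (1/k) := by
              apply mul_le_mul_of_nonneg_left _ (le_of_lt hkpos)
              rw [← h3]; exact h2
          _ = 1 := by field_simp
      nlinarith [h4]
    have hfact : Real.log (Nat.factorial (k+1)) = Real.log ((k:ℝ)+1) + Real.log (Nat.factorial k) := by
      rw [Nat.factorial_succ]
      push_cast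
      rw [Real.log_mul (by positivity) (by positivity)]
    push_cast
    rw [hfact]
    nlinarith [key, ihk]

lemma stirling_upper : ∀ k : ℕ, 1 ≤ k →
    Real.log (Nat.factorial k) ≤ (k:ℝ) * Real.log k - k + 1 + Real.log k := by
  intro k
  induction k with
  | zero => omega
  | succ k ih =>
    intro _
    rcases Nat.eq_or_lt_of_le (Nat.one_le_iff_ne_zero.2 (Nat.succ_ne_zero k)) with h | h
    · have hk0 : k = 0 := by omega
      subst hk0
      norm_num [Nat.factorial]
    have hk : 1 ≤ k := by omega
    have ihk := ih hk
    have hkpos : (0:ℝ) < k := by positivity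
    have key : 1 ≤ ((k:ℝ)+1) * (Real.log ((k:ℝ)+1) - Real.log k) := by
      have h1 : Real.log ((k:ℝ)+1) - Real.log k = Real.log (((k:ℝ)+1)/k) :=
        (Real.log_div (by positivity) (by positivity)).symm
      have h2 : 1 - (((k:ℝ)+1)/k)⁻¹ ≤ Real.log (((k:ℝ)+1)/k) :=
        Real.one_sub_inv_le_log_of_pos (by positivity)
      have h3 : 1 - (((k:ℝ)+1)/k)⁻¹ = 1/((k:ℝ)+1) := by
        rw [inv_div]; field_simp; ring
      rw [h1]
      calc (1:ℝ) = ((k:ℝ)+1) * (1/((k:ℝ)+1)) := by field_simp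
        _ ≤ ((k:ℝ)+1) * Real.log (((k:ℝ)+1)/k) := by
            apply mul_le_mul_of_nonneg_left _ (by positivity)
            rw [← h3]; exact h2
    have hfact : Real.log (Nat.factorial (k+1)) = Real.log ((k:ℝ)+1) + Real.log (Nat.factorial k) := by
      rw [Nat.factorial_succ]
      push_cast
      rw [Real.log_mul (by positivity) (by positivity)]
    push_cast
    rw [hfact]
    nlinarith [key, ihk]

lemma repSet_fiber_log {m : ℕ} (hm : 1 ≤ m) :
    ∑ i ∈ (repSet s m).filter (fun i => s i = a), Real.log (cnt s a (i-1))
      = Real.log (Nat.factorial (cnt s a m - 1)) := by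
  have h := repSet_fiber_sum s a hm (fun t => Real.log t)
  rw [h, log_factorial]

lemma repSet_fiber_card {m : ℕ} (hm : 1 ≤ m) :
    ((repSet s m).filter (fun i => s i = a)).card = cnt s a m - 1 := by
  rw [repSet_fiber]
  have himg : (((Finset.Icc 1 m).filter (fun i => s i = a)).filter
        (fun i => 2 ≤ cnt s a i)).image (fun i => cnt s a i)
      = (Finset.Icc 1 (cnt s a m)).filter (fun t => 2 ≤ t) := by
    rw [← Finset.filter_image, occ_image s a hm]
  have hinj : ∀ x ∈ ((Finset.Icc 1 m).filter (fun i => s i = a)).filter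
        (fun i => 2 ≤ cnt s a i), ∀ y ∈ ((Finset.Icc 1 m).filter (fun i => s i = a)).filter
        (fun i => 2 ≤ cnt s a i), cnt s a x = cnt s a y → x = y := by
    intro x hx y hy
    exact occ_injOn s a x (Finset.mem_of_mem_filter x hx) y (Finset.mem_of_mem_filter y hy)
  have := Finset.card_image_of_injOn hinj
  rw [himg] at this
  rw [← this]
  have : (Finset.Icc 1 (cnt s a m)).filter (fun t => 2 ≤ t) = Finset.Icc 2 (cnt s a m) := by
    ext t; simp only [Finset.mem_filter, Finset.mem_Icc]; omega
  rw [this]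
  simp [Nat.card_Icc]

lemma cnt_pos_of_mem_image {m : ℕ} {a : α} (ha : a ∈ (Finset.Icc 1 m).image s) :
    1 ≤ cnt s a m := by
  obtain ⟨i, hi, rfl⟩ := Finset.mem_image.1 ha
  rw [Finset.mem_Icc] at hi
  exact le_trans (cnt_pos_of_occ s (s i) hi.1 rfl) (cnt_mono s (s i) hi.2)

lemma sum_cnt {m : ℕ} : ∑ a ∈ (Finset.Icc 1 m).image s, cnt s a m = m := by
  have h := Finset.card_eq_sum_card_fiberwise
    (f := s) (s := Finset.Icc 1 m) (t := (Finset.Icc 1 m).image s)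
    (fun i hi => Finset.mem_image_of_mem s hi)
  simp only [Nat.card_Icc] at h
  unfold cnt
  omega

lemma card_image_le_m {m : ℕ} : ((Finset.Icc 1 m).image s).card ≤ m := by
  calc ((Finset.Icc 1 m).image s).card ≤ (Finset.Icc 1 m).card := Finset.card_image_le
    _ = m := by simp

lemma repSet_card {m : ℕ} (hm : 1 ≤ m) :
    (repSet s m).card = m - ((Finset.Icc 1 m).image s).card := by
  have hmap : ∀ i ∈ repSet s m, s i ∈ (Finset.Icc 1 m).image s := by
    intro i hi
    have : i ∈ Finset.Icc 1 m := Finset.mem_of_mem_filter i hi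
    exact Finset.mem_image_of_mem s this
  have h := Finset.card_eq_sum_card_fiberwise hmap
  rw [h]
  have hterm : ∀ a ∈ (Finset.Icc 1 m).image s,
      ((repSet s m).filter (fun i => s i = a)).card = cnt s a m - 1 :=
    fun a _ => repSet_fiber_card s a hm
  rw [Finset.sum_congr rfl hterm]
  have h1 : ∑ a ∈ (Finset.Icc 1 m).image s, (cnt s a m - 1)
      = (∑ a ∈ (Finset.Icc 1 m).image s, cnt s a m)
        - ((Finset.Icc 1 m).image s).card := by
    rw [Finset.card_eq_sum_ones]
    exact Finset.sum_tsub_distrib _ (fun a ha => cnt_pos_of_mem_image s ha)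
  rw [h1, sum_cnt]

lemma repSet_subset {m : ℕ} : repSet s m ⊆ Finset.Icc 1 m :=
  Finset.filter_subset _ _

lemma repSet_log_cnt {m : ℕ} (hm : 1 ≤ m) :
    ∑ i ∈ repSet s m, Real.log (cnt s (s i) (i-1))
      = ∑ a ∈ (Finset.Icc 1 m).image s, Real.log (Nat.factorial (cnt s a m - 1)) := by
  have hmap : ∀ i ∈ repSet s m, s i ∈ (Finset.Icc 1 m).image s := fun i hi =>
    Finset.mem_image_of_mem s (Finset.mem_of_mem_filter i hi)
  rw [← Finset.sum_fiberwise_of_maps_to hmap (fun i => Real.log (cnt s (s i) (i-1)))]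
  apply Finset.sum_congr rfl
  intro a ha
  rw [← repSet_fiber_log s a hm]
  apply Finset.sum_congr rfl
  intro i hi
  rw [(Finset.mem_filter.1 hi).2]

lemma sum_log_shift (m n : ℕ) :
    ∑ i ∈ Finset.Icc 1 m, Real.log ((i:ℝ) + n)
      = Real.log (Nat.factorial (m+n)) - Real.log (Nat.factorial n) := by
  rw [log_factorial, log_factorial]
  have himg : (Finset.Icc 1 m).image (fun i => i + n) = Finset.Icc (n+1) (m+n) := by
    ext t
    simp only [Finset.mem_image, Finset.mem_Icc]
    constructor
    · rintro ⟨i, hi, rfl⟩; omega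
    · rintro ⟨h1, h2⟩; exact ⟨t - n, by omega, by omega⟩
  have h1 : ∑ i ∈ Finset.Icc 1 m, Real.log ((i:ℝ) + n)
      = ∑ t ∈ Finset.Icc (n+1) (m+n), Real.log t := by
    rw [← himg, Finset.sum_image (by intro x _ y _ h; simp only at h; omega)]
    apply Finset.sum_congr rfl
    intro i _
    push_cast
    ring_nf
  have hsplit : Finset.Icc 1 (m+n) = Finset.Icc 1 n ∪ Finset.Icc (n+1) (m+n) := by
    ext t; simp only [Finset.mem_union, Finset.mem_Icc]; omega
  have hdisj : Disjoint (Finset.Icc 1 n) (Finset.Icc (n+1) (m+n)) := by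
    rw [Finset.disjoint_left]
    intro t ht ht'
    simp only [Finset.mem_Icc] at ht ht'
    omega
  rw [h1, hsplit, Finset.sum_union hdisj]
  ring

lemma repSet_log_idx {m n : ℕ} (hm : 1 ≤ m) (d : ℕ)
    (hd : d = m - (repSet s m).card) (hdm : (repSet s m).card ≤ m) :
    ∑ i ∈ repSet s m, Real.log ((i:ℝ) + n)
      ≤ Real.log (Nat.factorial (m+n)) - Real.log (Nat.factorial n)
        - d * Real.log ((n:ℝ)+1) := by
  have hsub : repSet s m ⊆ Finset.Icc 1 m := repSet_subset s
  have hsplit : ∑ i ∈ Finset.Icc 1 m \ repSet s m, Real.log ((i:ℝ) + n)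
      + ∑ i ∈ repSet s m, Real.log ((i:ℝ) + n)
      = ∑ i ∈ Finset.Icc 1 m, Real.log ((i:ℝ) + n) := Finset.sum_sdiff hsub
  have hcard : (Finset.Icc 1 m \ repSet s m).card = d := by
    rw [Finset.card_sdiff_of_subset hsub, Nat.card_Icc]
    omega
  have hlb : ∀ i ∈ Finset.Icc 1 m \ repSet s m, Real.log ((n:ℝ)+1) ≤ Real.log ((i:ℝ)+n) := by
    intro i hi
    have hi1 : 1 ≤ i := by
      have := (Finset.mem_Icc.1 (Finset.mem_sdiff.1 hi).1).1; omega
    apply Real.log_le_log (by positivity)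
    have : (1:ℝ) ≤ (i:ℝ) := by exact_mod_cast hi1
    linarith
  have hge : (d:ℝ) * Real.log ((n:ℝ)+1) ≤ ∑ i ∈ Finset.Icc 1 m \ repSet s m, Real.log ((i:ℝ)+n) := by
    calc (d:ℝ) * Real.log ((n:ℝ)+1)
        = ∑ _i ∈ Finset.Icc 1 m \ repSet s m, Real.log ((n:ℝ)+1) := by
          rw [Finset.sum_const, hcard]; ring
      _ ≤ _ := Finset.sum_le_sum hlb
  rw [← sum_log_shift m n, ← hsplit]
  linarith

lemma entropy_eq {m : ℕ} (hm : 1 ≤ m) :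
    entropy s m * ((m:ℝ) * Real.log 2)
      = (m:ℝ) * Real.log m
        - ∑ a ∈ (Finset.Icc 1 m).image s, (cnt s a m : ℝ) * Real.log (cnt s a m) := by
  have hm0 : (m:ℝ) ≠ 0 := by positivity
  have hL2 : Real.log 2 ≠ 0 := by
    have := Real.log_pos (by norm_num : (1:ℝ) < 2); linarith
  unfold entropy
  rw [Finset.sum_mul]
  have hterm : ∀ a ∈ (Finset.Icc 1 m).image s,
      ((cnt s a m : ℝ) / m * Real.logb 2 ((m:ℝ) / (cnt s a m : ℝ))) * ((m:ℝ) * Real.log 2)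
        = (cnt s a m : ℝ) * Real.log m - (cnt s a m : ℝ) * Real.log (cnt s a m) := by
    intro a ha
    have hk : 1 ≤ cnt s a m := cnt_pos_of_mem_image s ha
    have hk0 : (cnt s a m : ℝ) ≠ 0 := by positivity
    rw [Real.logb, Real.log_div hm0 hk0]
    field_simp
  rw [Finset.sum_congr rfl hterm, Finset.sum_sub_distrib, ← Finset.sum_mul]
  have : ∑ a ∈ (Finset.Icc 1 m).image s, (cnt s a m : ℝ) = m := by
    exact_mod_cast congrArg (Nat.cast : ℕ → ℝ) (sum_cnt s (m := m))
  rw [this]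

lemma aux_nd (n d : ℕ) (hn : 1 ≤ n) (hd : 1 ≤ d) :
    (n:ℝ) ≤ (n:ℝ) * Real.log n + d * (Real.log ((n:ℝ)+1) + 1) := by
  have hd1 : (1:ℝ) ≤ d := by exact_mod_cast hd
  have hlogn1 : 0 ≤ Real.log ((n:ℝ)+1) := by
    apply Real.log_nonneg
    have : (1:ℝ) ≤ (n:ℝ) := by exact_mod_cast hn
    linarith
  rcases Nat.lt_or_ge n 3 with h | h
  · interval_cases n
    · -- n = 1
      norm_num at hlogn1 ⊢
      have hmul : (1:ℝ)*(Real.log 2 + 1) ≤ (d:ℝ)*(Real.log 2 + 1) :=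
        mul_le_mul_of_nonneg_right hd1 (by linarith)
      nlinarith [hmul, hlogn1]
    · -- n = 2
      have h2 : (0.6931471803 : ℝ) < Real.log 2 := Real.log_two_gt_d9
      norm_num at hlogn1 ⊢
      have h31 : Real.log (2+1) = Real.log 3 := by norm_num
      have hmul : (1:ℝ)*(Real.log 3 + 1) ≤ (d:ℝ)*(Real.log 3 + 1) :=
        mul_le_mul_of_nonneg_right hd1 (by linarith)
      nlinarith [hd1, hlogn1, h2, hmul]
  · have h3 : (1:ℝ) ≤ Real.log n := by
      have he : Real.exp 1 < 3 := lt_trans Real.exp_one_lt_d9 (by norm_num)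
      have h3n : (3:ℝ) ≤ (n:ℝ) := by exact_mod_cast h
      calc (1:ℝ) = Real.log (Real.exp 1) := (Real.log_exp 1).symm
        _ ≤ Real.log n := Real.log_le_log (Real.exp_pos 1) (by linarith)
    have hn0 : (0:ℝ) ≤ n := by positivity
    nlinarith [hd1, hlogn1]

lemma mlog_bound (m n : ℕ) (hm : 1 ≤ m) :
    (m:ℝ) * Real.log ((m:ℝ)+(n:ℝ)) ≤ (m:ℝ) * Real.log m + n := by
  have hm0 : (0:ℝ) < m := by exact_mod_cast hm
  have hn0 : (0:ℝ) ≤ n := Nat.cast_nonneg n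
  have h1 : Real.log ((m:ℝ)+n) - Real.log m = Real.log (((m:ℝ)+n)/m) :=
    (Real.log_div (by positivity) (by positivity)).symm
  have h2 : Real.log (((m:ℝ)+n)/m) ≤ ((m:ℝ)+n)/m - 1 :=
    Real.log_le_sub_one_of_pos (by positivity)
  have h3 : ((m:ℝ)+n)/m - 1 = (n:ℝ)/m := by field_simp; ring
  have h4 : (m:ℝ) * (Real.log ((m:ℝ)+n) - Real.log m) ≤ n := by
    rw [h1]
    calc (m:ℝ) * Real.log (((m:ℝ)+n)/m) ≤ (m:ℝ) * ((n:ℝ)/m) := by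
          apply mul_le_mul_of_nonneg_left _ (le_of_lt hm0)
          rw [← h3]; exact h2
      _ = n := by field_simp
  nlinarith [h4]

lemma cnt_le_m {m : ℕ} (a : α) : cnt s a m ≤ m := by
  calc cnt s a m ≤ (Finset.Icc 1 m).card := Finset.card_filter_le _ _
    _ = m := by simp

lemma core {m n : ℕ} (s : ℕ → α) (hm : 1 ≤ m) (hn : 1 ≤ n)
    (hd : ((Finset.Icc 1 m).image s).card ≤ n) :
    ∑ i ∈ repSet s m, Real.log ((i:ℝ)+(n:ℝ))
      - ∑ i ∈ repSet s m, Real.log (cnt s (s i) (i-1))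
    ≤ entropy s m * ((m:ℝ) * Real.log 2) + ((n:ℝ)+1) * Real.log ((m:ℝ)+(n:ℝ))
      + (((Finset.Icc 1 m).image s).card : ℝ) * Real.log m := by
  set A := (Finset.Icc 1 m).image s with hA
  set d := A.card with hdd
  have hd1 : 1 ≤ d := by
    apply Finset.card_pos.2
    exact ⟨s 1, Finset.mem_image_of_mem s (by simp [hm])⟩
  have hdm : d ≤ m := card_image_le_m s
  -- index sum bound
  have hrcard : (repSet s m).card = m - d := repSet_card s hm
  have hrm : (repSet s m).card ≤ m := by omega
  have hSA : ∑ i ∈ repSet s m, Real.log ((i:ℝ)+(n:ℝ))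
      ≤ Real.log (Nat.factorial (m+n)) - Real.log (Nat.factorial n)
        - d * Real.log ((n:ℝ)+1) :=
    repSet_log_idx s hm d (by omega) hrm
  -- cnt sum identity and lower bound
  have hSB : ∑ i ∈ repSet s m, Real.log (cnt s (s i) (i-1))
      = ∑ a ∈ A, Real.log (Nat.factorial (cnt s a m - 1)) := repSet_log_cnt s hm
  have hterm : ∀ a ∈ A, (cnt s a m : ℝ) * Real.log (cnt s a m) - (cnt s a m : ℝ) + 1
        - Real.log (cnt s a m) ≤ Real.log (Nat.factorial (cnt s a m - 1)) := by
    intro a ha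
    have hk : 1 ≤ cnt s a m := cnt_pos_of_mem_image s ha
    have hfac : (cnt s a m) * Nat.factorial (cnt s a m - 1) = Nat.factorial (cnt s a m) :=
      Nat.mul_factorial_pred (by omega)
    have hlog : Real.log (Nat.factorial (cnt s a m))
        = Real.log (cnt s a m) + Real.log (Nat.factorial (cnt s a m - 1)) := by
      rw [← hfac]
      push_cast
      rw [Real.log_mul (by positivity) (by positivity)]
    have := stirling_lower (cnt s a m) hk
    linarith
  have hSBlb : ∑ a ∈ A, ((cnt s a m : ℝ) * Real.log (cnt s a m)) - (m:ℝ) + (d:ℝ)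
        - ∑ a ∈ A, Real.log (cnt s a m)
      ≤ ∑ a ∈ A, Real.log (Nat.factorial (cnt s a m - 1)) := by
    have h1 := Finset.sum_le_sum hterm
    have h2 : ∑ a ∈ A, ((cnt s a m : ℝ) * Real.log (cnt s a m) - (cnt s a m : ℝ) + 1
          - Real.log (cnt s a m))
        = ∑ a ∈ A, ((cnt s a m : ℝ) * Real.log (cnt s a m)) - (m:ℝ) + (d:ℝ)
          - ∑ a ∈ A, Real.log (cnt s a m) := by
      rw [Finset.sum_sub_distrib, Finset.sum_add_distrib, Finset.sum_sub_distrib,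
        Finset.sum_const]
      have hc : ∑ a ∈ A, (cnt s a m : ℝ) = m := by
        exact_mod_cast congrArg (Nat.cast : ℕ → ℝ) (sum_cnt s (m := m))
      rw [hc]
      simp [hdd]
    linarith [h1, h2.symm.le]
  -- stirling bounds
  have hF : Real.log (Nat.factorial (m+n))
      ≤ ((m:ℝ)+(n:ℝ)) * Real.log ((m:ℝ)+(n:ℝ)) - ((m:ℝ)+(n:ℝ)) + 1 + Real.log ((m:ℝ)+(n:ℝ)) := by
    have := stirling_upper (m+n) (by omega)
    push_cast at this
    convert this using 3 <;> push_cast <;> ring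
  have hFn : (n:ℝ) * Real.log (n:ℝ) - (n:ℝ) + 1 ≤ Real.log (Nat.factorial n) :=
    stirling_lower n hn
  -- entropy
  have hH := entropy_eq s hm
  -- Slk bound
  have hSlk : ∑ a ∈ A, Real.log (cnt s a m) ≤ (d:ℝ) * Real.log m := by
    calc ∑ a ∈ A, Real.log (cnt s a m) ≤ ∑ a ∈ A, Real.log m := by
          apply Finset.sum_le_sum
          intro a ha
          have h1 : 1 ≤ cnt s a m := cnt_pos_of_mem_image s ha
          apply Real.log_le_log (by exact_mod_cast h1)
          exact_mod_cast cnt_le_m s a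
      _ = (d:ℝ) * Real.log m := by rw [Finset.sum_const]; simp [hdd]
  have hmlog := mlog_bound m n hm
  have hnd := aux_nd n d hn hd1
  have hd1r : (1:ℝ) ≤ d := by exact_mod_cast hd1
  have hdn : (d:ℝ) ≤ n := by exact_mod_cast hd
  linarith [hSA, hSB.le, hSBlb, hF, hFn, hH, hSlk, hmlog, hnd]

end Aux

theorem stmt_7 (ℓ n m : ℕ) (hℓ : 1 ≤ ℓ) (hn : 1 ≤ n) (hm : n ≤ m)
    (s : ℕ → Fin n) (hR : n ≤ (repSet s m).card)
    (w : ℕ → ℤ)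
    (hw : ∀ i ∈ repSet s m,
      w i = ⌈Real.logb 2 ((2 : ℝ) ^ ℓ /
        (((2 : ℝ) ^ ℓ - 1) * (cnt s (s i) (i - 1) : ℝ) / ((i : ℝ) + (n : ℝ))
          + 1 / (n : ℝ)))⌉) :
    (∀ i ∈ repSet s m, w i ≤ ⌈Real.logb 2 (n : ℝ)⌉ + (ℓ : ℤ)) ∧
    ∑ i ∈ repSet s m, (w i : ℝ)
      ≤ (entropy s m + 1 + 1 / (((2 : ℝ) ^ ℓ - 1) * Real.log 2)) * m
        + ((n : ℝ) + 1) * Real.logb 2 (m : ℝ)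
        + (n : ℝ) * Real.logb 2 ((m : ℝ) + (n : ℝ)) + 2 := by
  have hm1 : 1 ≤ m := le_trans hn hm
  have hn0 : (0:ℝ) < n := by exact_mod_cast hn
  have hm0 : (0:ℝ) < m := by exact_mod_cast hm1
  have hL2 : (0:ℝ) < Real.log 2 := Real.log_pos (by norm_num)
  have h2l : (2:ℝ) ≤ 2^ℓ := by
    calc (2:ℝ) = 2^1 := (pow_one 2).symm
      _ ≤ 2^ℓ := pow_le_pow_right₀ (by norm_num) hℓ
  have hexp1 : (1:ℝ) ≤ (2:ℝ)^ℓ - 1 := by linarith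
  set e : ℝ := 1/((2:ℝ)^ℓ - 1) with he
  have he0 : 0 < e := by positivity
  constructor
  · -- part (a)
    intro i hi
    rw [hw i hi]
    have hi1 : 1 ≤ i := ((mem_repSet_iff s).1 hi).1.1
    have hin : (0:ℝ) < (i:ℝ) + n := by positivity
    set c : ℝ := (cnt s (s i) (i-1) : ℝ) with hc
    have hc0 : 0 ≤ c := Nat.cast_nonneg _
    set D : ℝ := ((2:ℝ)^ℓ - 1) * c / ((i:ℝ) + n) + 1/(n:ℝ) with hD
    have hDge : 1/(n:ℝ) ≤ D := by
      have : 0 ≤ ((2:ℝ)^ℓ - 1) * c / ((i:ℝ) + n) := by positivity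
      linarith
    have hDpos : 0 < D := lt_of_lt_of_le (by positivity) hDge
    have hXle : (2:ℝ)^ℓ / D ≤ (n:ℝ) * 2^ℓ := by
      have h1 : (2:ℝ)^ℓ / D ≤ (2:ℝ)^ℓ / (1/(n:ℝ)) := by
        gcongr
      have h2 : (2:ℝ)^ℓ / (1/(n:ℝ)) = (n:ℝ) * 2^ℓ := by
        field_simp
      linarith
    have hlogb : Real.logb 2 ((2:ℝ)^ℓ / D) ≤ Real.logb 2 ((n:ℝ) * 2^ℓ) :=
      Real.logb_le_logb_of_le (by norm_num) (by positivity) hXle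
    have hsplit : Real.logb 2 ((n:ℝ) * 2^ℓ) = Real.logb 2 (n:ℝ) + (ℓ:ℝ) := by
      rw [Real.logb_mul (by positivity) (by positivity)]
      congr 1
      rw [Real.logb, Real.log_pow]
      field_simp
    calc ⌈Real.logb 2 ((2:ℝ)^ℓ / D)⌉ ≤ ⌈Real.logb 2 ((n:ℝ) * 2^ℓ)⌉ := Int.ceil_le_ceil hlogb
      _ = ⌈Real.logb 2 (n:ℝ) + ((ℓ:ℤ):ℝ)⌉ := by rw [hsplit]; norm_num
      _ = ⌈Real.logb 2 (n:ℝ)⌉ + (ℓ:ℤ) := Int.ceil_add_intCast _ _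
  · -- part (b)
    set A := (Finset.Icc 1 m).image s with hA
    set d := A.card with hdd
    have hdn : d ≤ n := by
      calc d ≤ (Finset.univ : Finset (Fin n)).card := Finset.card_le_card (Finset.subset_univ A)
        _ = n := by simp
    have hdm : d ≤ m := card_image_le_m s
    have hrcard : (repSet s m).card = m - d := repSet_card s hm1
    have hr : ((repSet s m).card : ℝ) = (m:ℝ) - (d:ℝ) := by
      rw [hrcard]; push_cast [Nat.cast_sub hdm]; ring
    -- per-term bound
    have f1 : ∀ i ∈ repSet s m, (w i : ℝ)
        ≤ 1 + (e + Real.log ((i:ℝ)+(n:ℝ)) - Real.log ((cnt s (s i) (i-1) : ℝ)))/Real.log 2 := by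
      intro i hi
      obtain ⟨⟨hi1, him⟩, hcge⟩ := (mem_repSet_iff s).1 hi
      rw [hw i hi]
      set c : ℝ := (cnt s (s i) (i-1) : ℝ) with hc
      have hc1 : (1:ℝ) ≤ c := by rw [hc]; exact_mod_cast hcge
      have hin : (0:ℝ) < (i:ℝ) + n := by positivity
      set D : ℝ := ((2:ℝ)^ℓ - 1) * c / ((i:ℝ) + n) + 1/(n:ℝ) with hD
      set D0 : ℝ := ((2:ℝ)^ℓ - 1) * c / ((i:ℝ) + n) with hD0
      have hD0pos : 0 < D0 := by
        rw [hD0]; positivity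
      have hDge : D0 ≤ D := by
        have : 0 < 1/(n:ℝ) := by positivity
        rw [hD, hD0]; linarith
      have hDpos : 0 < D := lt_of_lt_of_le hD0pos hDge
      have hXle : (2:ℝ)^ℓ / D ≤ (2:ℝ)^ℓ / D0 := by gcongr
      have heq : (2:ℝ)^ℓ / D0 = ((2:ℝ)^ℓ/((2:ℝ)^ℓ-1)) * (((i:ℝ)+n)/c) := by
        rw [hD0]
        field_simp
      have hlogsplit : Real.log ((2:ℝ)^ℓ / D0)
          = Real.log ((2:ℝ)^ℓ/((2:ℝ)^ℓ-1)) + (Real.log ((i:ℝ)+(n:ℝ)) - Real.log c) := by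
        rw [heq, Real.log_mul (by positivity) (by positivity),
          Real.log_div (by positivity) (by positivity),
          Real.log_div (by positivity) (by positivity)]
      have hP1 : Real.log ((2:ℝ)^ℓ/((2:ℝ)^ℓ-1)) ≤ e := by
        have hsplit : (2:ℝ)^ℓ/((2:ℝ)^ℓ-1) = 1 + e := by
          rw [he]; field_simp; ring
        rw [hsplit]
        have := Real.log_le_sub_one_of_pos (show (0:ℝ) < 1 + e by positivity)
        linarith
      have hlogle : Real.log ((2:ℝ)^ℓ / D)
          ≤ e + Real.log ((i:ℝ)+(n:ℝ)) - Real.log c := by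
        have h1 : Real.log ((2:ℝ)^ℓ / D) ≤ Real.log ((2:ℝ)^ℓ / D0) :=
          Real.log_le_log (by positivity) hXle
        linarith [hlogsplit, hP1, h1]
      have hceil : ((⌈Real.logb 2 ((2:ℝ)^ℓ / D)⌉ : ℤ) : ℝ)
          ≤ Real.logb 2 ((2:ℝ)^ℓ / D) + 1 :=
        le_of_lt (Int.ceil_lt_add_one _)
      have hlogb : Real.logb 2 ((2:ℝ)^ℓ / D)
          ≤ (e + Real.log ((i:ℝ)+(n:ℝ)) - Real.log c)/Real.log 2 := by
        rw [Real.logb]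
        exact (div_le_div_iff_of_pos_right hL2).2 hlogle
      linarith
    have hsum1 := Finset.sum_le_sum f1
    set SA := ∑ i ∈ repSet s m, Real.log ((i:ℝ)+(n:ℝ)) with hSA
    set SB := ∑ i ∈ repSet s m, Real.log ((cnt s (s i) (i-1) : ℝ)) with hSB
    set r := (repSet s m).card with hrr
    have hsum2 : ∑ i ∈ repSet s m,
        (1 + (e + Real.log ((i:ℝ)+(n:ℝ)) - Real.log ((cnt s (s i) (i-1) : ℝ)))/Real.log 2)
        = r + ((r:ℝ)*e + SA - SB)/Real.log 2 := by
      rw [Finset.sum_add_distrib, Finset.sum_const, ← Finset.sum_div]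
      have : ∑ i ∈ repSet s m,
          (e + Real.log ((i:ℝ)+(n:ℝ)) - Real.log ((cnt s (s i) (i-1) : ℝ)))
          = (r:ℝ)*e + SA - SB := by
        rw [Finset.sum_sub_distrib, Finset.sum_add_distrib, Finset.sum_const, hSA, hSB]
        simp [hrr]
      rw [this]
      simp [hrr]
    have key : SA - SB ≤ entropy s m * ((m:ℝ) * Real.log 2)
        + ((n:ℝ)+1) * Real.log ((m:ℝ)+(n:ℝ)) + (d:ℝ) * Real.log m := by
      have := core (n := n) s hm1 hn hdn
      rw [← hA, ← hdd] at this
      exact this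
    -- final arithmetic
    have hlmn : Real.log ((m:ℝ)+(n:ℝ)) ≤ Real.log 2 + Real.log m := by
      have h1 : (m:ℝ)+(n:ℝ) ≤ 2*m := by
        have : (n:ℝ) ≤ m := by exact_mod_cast hm
        linarith
      calc Real.log ((m:ℝ)+(n:ℝ)) ≤ Real.log (2*(m:ℝ)) := Real.log_le_log (by positivity) h1
        _ = Real.log 2 + Real.log m := Real.log_mul (by norm_num) (by positivity)
    have hdLm : (d:ℝ) * Real.log m ≤ (n:ℝ) * Real.log m := by
      apply mul_le_mul_of_nonneg_right _ (Real.log_nonneg (by exact_mod_cast hm1))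
      exact_mod_cast hdn
    have hde : 0 ≤ (d:ℝ)*e := by positivity
    have hdL2 : 0 ≤ (d:ℝ)*Real.log 2 := by positivity
    have hHe : 1 / (((2:ℝ)^ℓ - 1) * Real.log 2) = e / Real.log 2 := by
      rw [he, div_div]
    rw [hHe]
    simp only [Real.logb]
    have hmain : (r:ℝ) + ((r:ℝ)*e + SA - SB)/Real.log 2
        ≤ (entropy s m + 1 + e/Real.log 2) * m
          + ((n:ℝ)+1) * (Real.log m / Real.log 2)
          + (n:ℝ) * (Real.log ((m:ℝ)+(n:ℝ)) / Real.log 2) + 2 := by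
      set H := entropy s m with hH
      set Lm := Real.log (m:ℝ) with hLm
      set Lmn := Real.log ((m:ℝ)+(n:ℝ)) with hLmn
      set L2 := Real.log 2 with hL2'
      apply le_of_mul_le_mul_right _ hL2
      have e1 : ((r:ℝ) + ((r:ℝ)*e + SA - SB)/L2) * L2
          = (r:ℝ)*L2 + (r:ℝ)*e + SA - SB := by
        field_simp
        ring
      have e2 : ((H + 1 + e/L2) * m + ((n:ℝ)+1) * (Lm/L2) + (n:ℝ) * (Lmn/L2) + 2) * L2
          = H*((m:ℝ)*L2) + (m:ℝ)*L2 + e*(m:ℝ) + ((n:ℝ)+1)*Lm + (n:ℝ)*Lmn + 2*L2 := by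
        field_simp
      rw [e1, e2]
      have hrL2 : (r:ℝ)*L2 = (m:ℝ)*L2 - (d:ℝ)*L2 := by rw [hr]; ring
      have hre : (r:ℝ)*e = (m:ℝ)*e - (d:ℝ)*e := by rw [hr]; ring
      have hme : (m:ℝ)*e = e*(m:ℝ) := by ring
      linarith [key, hlmn, hdLm, hde, hdL2]
    calc ∑ i ∈ repSet s m, (w i : ℝ)
        ≤ (r:ℝ) + ((r:ℝ)*e + SA - SB)/Real.log 2 := by rw [← hsum2]; exact hsum1
      _ ≤ _ := hmain
end

section
/- Let n ≥ 1 and let c_1, …, c_n be nonnegative integers with c_1 + ⋯ + c_n = m. Then there exist binary strings w_1, …, w_n such that: (i) the length of w_i is exactly ⌈log( (m+n) / (c_i + 1) )⌉ + 1 for each i; (ii) for all i ≠ j, w_i is not a prefix of w_j; and (iii) w_1 < w_2 < ⋯ < w_n in lexicographic order. -/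
def fbits : ℕ → ℕ → List Bool
  | 0, _ => []
  | k+1, a => decide (2^k ≤ a) :: fbits k (a % 2^k)

lemma fbits_length : ∀ k a, (fbits k a).length = k
  | 0, _ => rfl
  | k+1, a => by simp [fbits, fbits_length k]

lemma fbits_key : ∀ k l a b, a < 2^k → b < 2^l → (a+1)*2^l ≤ b*2^k →
    List.Lex (· < ·) (fbits k a) (fbits l b) ∧
    ¬ fbits k a <+: fbits l b ∧ ¬ fbits l b <+: fbits k a
  | 0, l, a, b, ha, hb, hle => by
      interval_cases a
      simp at hle
      omega
  | k+1, 0, a, b, ha, hb, hle => by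
      interval_cases b
      simp at hle
  | k+1, l+1, a, b, ha, hb, hle => by
      have hk : (0:ℕ) < 2^k := Nat.pow_pos (by norm_num)
      have hl : (0:ℕ) < 2^l := Nat.pow_pos (by norm_num)
      -- halved inequality
      have hle' : (a+1)*2^l ≤ b*2^k := by
        have h2 : ((a+1)*2^l)*2 ≤ (b*2^k)*2 := by
          have e1 : ((a+1)*2^l)*2 = (a+1)*2^(l+1) := by ring
          have e2 : (b*2^k)*2 = b*2^(k+1) := by ring
          rw [e1, e2]; exact hle
        exact Nat.le_of_mul_le_mul_right h2 (by norm_num)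
      by_cases hA : 2^k ≤ a <;> by_cases hB : 2^l ≤ b
      · -- both bits true
        set a' := a % 2^k with ha'def
        set b' := b % 2^l with hb'def
        have haa : a' = a - 2^k := by
          rw [ha'def, Nat.mod_eq_sub_mod hA, Nat.mod_eq_of_lt (by rw [pow_succ] at ha; omega)]
        have hbb : b' = b - 2^l := by
          rw [hb'def, Nat.mod_eq_sub_mod hB, Nat.mod_eq_of_lt (by rw [pow_succ] at hb; omega)]
        have ha' : a' < 2^k := Nat.mod_lt _ hk
        have hb' : b' < 2^l := Nat.mod_lt _ hl
        have hle2 : (a'+1)*2^l ≤ b'*2^k := by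
          have e1 : (a+1)*2^l = (a'+1)*2^l + 2^k*2^l := by
            have : a + 1 = (a' + 1) + 2^k := by omega
            rw [this]; ring
          have e2 : b*2^k = b'*2^k + 2^l*2^k := by
            have : b = b' + 2^l := by omega
            rw [this]; ring
          have e3 : (2:ℕ)^k*2^l = 2^l*2^k := by ring
          rw [e1, e2, e3] at hle'
          exact Nat.le_of_add_le_add_right hle'
        obtain ⟨hlex, hp1, hp2⟩ := fbits_key k l a' b' ha' hb' hle2
        have hbit1 : decide (2^k ≤ a) = true := by simp [hA]
        have hbit2 : decide (2^l ≤ b) = true := by simp [hB]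
        refine ⟨?_, ?_, ?_⟩
        · show List.Lex _ (_ :: _) (_ :: _)
          rw [hbit1, hbit2]; exact List.Lex.cons hlex
        · show ¬ (_ :: _) <+: (_ :: _)
          rw [hbit1, hbit2, List.cons_prefix_cons]; exact fun h => hp1 h.2
        · show ¬ (_ :: _) <+: (_ :: _)
          rw [hbit1, hbit2, List.cons_prefix_cons]; exact fun h => hp2 h.2
      · -- a-bit true, b-bit false: impossible
        exfalso
        push_neg at hB
        have h1 : 2^k*2^(l+1) < (a+1)*2^(l+1) :=
          (Nat.mul_lt_mul_right (Nat.pow_pos (by norm_num))).mpr (by omega)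
        have h2 : b*2^(k+1) < 2^l*2^(k+1) :=
          (Nat.mul_lt_mul_right (Nat.pow_pos (by norm_num))).mpr (by omega)
        have h3 : (2:ℕ)^k*2^(l+1) = 2^l*2^(k+1) := by ring
        linarith
      · -- a-bit false, b-bit true
        push_neg at hA
        have hbit1 : decide (2^k ≤ a) = false := by simp; omega
        have hbit2 : decide (2^l ≤ b) = true := by simp [hB]
        refine ⟨?_, ?_, ?_⟩
        · show List.Lex _ (_ :: _) (_ :: _)
          rw [hbit1, hbit2]; exact List.Lex.rel (by simp)
        · show ¬ (_ :: _) <+: (_ :: _)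
          rw [hbit1, hbit2, List.cons_prefix_cons]; simp
        · show ¬ (_ :: _) <+: (_ :: _)
          rw [hbit1, hbit2, List.cons_prefix_cons]; simp
      · -- both bits false
        push_neg at hA hB
        have haa : a % 2^k = a := Nat.mod_eq_of_lt hA
        have hbb : b % 2^l = b := Nat.mod_eq_of_lt hB
        obtain ⟨hlex, hp1, hp2⟩ := fbits_key k l a b hA hB hle'
        have hbit1 : decide (2^k ≤ a) = false := by simp; omega
        have hbit2 : decide (2^l ≤ b) = false := by simp; omega
        refine ⟨?_, ?_, ?_⟩
        · show List.Lex _ (_ :: _) (_ :: _)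
          rw [hbit1, hbit2, haa, hbb]; exact List.Lex.cons hlex
        · show ¬ (_ :: _) <+: (_ :: _)
          rw [hbit1, hbit2, haa, hbb, List.cons_prefix_cons]; exact fun h => hp1 h.2
        · show ¬ (_ :: _) <+: (_ :: _)
          rw [hbit1, hbit2, haa, hbb, List.cons_prefix_cons]; exact fun h => hp2 h.2

theorem stmt_8 (n m : ℕ) (hn : 1 ≤ n) (c : Fin n → ℕ)
    (hsum : ∑ i, c i = m) :
    ∃ w : Fin n → List Bool,
      (∀ i, ((w i).length : ℤ)
          = ⌈Real.logb 2 (((m : ℝ) + (n : ℝ)) / ((c i : ℝ) + 1))⌉ + 1) ∧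
      (∀ i j, i ≠ j → ¬ (w i <+: w j)) ∧
      (∀ i j, i < j → List.Lex (· < ·) (w i) (w j)) := by
  classical
  set M : ℕ := m + n with hM
  have hMpos : 0 < M := by omega
  set d : Fin n → ℕ := fun i => c i + 1 with hd
  have hdsum : ∑ i, d i = M := by
    simp [hd, Finset.sum_add_distrib, hsum, hM]
  have hdle : ∀ i, d i ≤ M := by
    intro i
    rw [← hdsum]
    exact Finset.single_le_sum (fun _ _ => Nat.zero_le _) (Finset.mem_univ i)
  have hdpos : ∀ i, 1 ≤ d i := fun i => Nat.le_add_left 1 (c i)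
  -- the ceiling is nonneg
  have hceil : ∀ i, (0:ℤ) ≤ ⌈Real.logb 2 (((m : ℝ) + (n : ℝ)) / ((c i : ℝ) + 1))⌉ := by
    intro i
    apply Int.ceil_nonneg
    apply Real.logb_nonneg (by norm_num)
    rw [le_div_iff₀ (by positivity)]
    have := hdle i
    have : ((c i : ℝ) + 1) ≤ (m:ℝ) + (n:ℝ) := by
      have h1 : (d i : ℝ) ≤ (M : ℝ) := by exact_mod_cast this
      push_cast [hd, hM] at h1
      linarith
    linarith
  set L : Fin n → ℕ := fun i =>
    (⌈Real.logb 2 (((m : ℝ) + (n : ℝ)) / ((c i : ℝ) + 1))⌉).toNat + 1 with hL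
  have hLcast : ∀ i, ((L i : ℕ) : ℤ)
      = ⌈Real.logb 2 (((m : ℝ) + (n : ℝ)) / ((c i : ℝ) + 1))⌉ + 1 := by
    intro i
    simp only [hL]
    push_cast [Int.toNat_of_nonneg (hceil i)]
    ring
  -- key inequality : 2*M ≤ d i * 2^(L i)
  have hkey : ∀ i, 2*M ≤ d i * 2^(L i) := by
    intro i
    have hx : (1:ℝ) ≤ ((m : ℝ) + (n : ℝ)) / ((c i : ℝ) + 1) := by
      rw [le_div_iff₀ (by positivity)]
      have h1 : (d i : ℝ) ≤ (M : ℝ) := by exact_mod_cast hdle i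
      push_cast [hd, hM] at h1
      linarith
    have hxpos : (0:ℝ) < ((m : ℝ) + (n : ℝ)) / ((c i : ℝ) + 1) := by linarith
    set x := ((m : ℝ) + (n : ℝ)) / ((c i : ℝ) + 1) with hxdef
    have h1 : x ≤ (2:ℝ) ^ ((⌈Real.logb 2 x⌉).toNat : ℕ) := by
      have h2 : x = (2:ℝ) ^ (Real.logb 2 x) := (Real.rpow_logb (by norm_num) (by norm_num) hxpos).symm
      have h3 : Real.logb 2 x ≤ ((⌈Real.logb 2 x⌉).toNat : ℝ) := by
        calc Real.logb 2 x ≤ (⌈Real.logb 2 x⌉ : ℝ) := Int.le_ceil _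
          _ = ((⌈Real.logb 2 x⌉).toNat : ℝ) := by
              norm_cast
              exact (Int.toNat_of_nonneg (hceil i)).symm
      calc x = (2:ℝ) ^ (Real.logb 2 x) := h2
        _ ≤ (2:ℝ) ^ (((⌈Real.logb 2 x⌉).toNat : ℕ) : ℝ) :=
            Real.rpow_le_rpow_of_exponent_le (by norm_num) h3
        _ = (2:ℝ) ^ ((⌈Real.logb 2 x⌉).toNat : ℕ) := Real.rpow_natCast 2 _
    -- so M ≤ d i * 2^toNat
    have h4 : (M:ℝ) ≤ (d i : ℝ) * (2:ℝ) ^ ((⌈Real.logb 2 x⌉).toNat : ℕ) := by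
      rw [hxdef] at h1
      rw [div_le_iff₀ (by positivity)] at h1
      have hM' : (M:ℝ) = (m:ℝ) + (n:ℝ) := by push_cast [hM]; ring
      have hd' : (d i : ℝ) = (c i : ℝ) + 1 := by push_cast [hd]; ring
      rw [hM', hd']
      linarith [h1]
    have h5 : M ≤ d i * 2 ^ ((⌈Real.logb 2 x⌉).toNat : ℕ) := by exact_mod_cast h4
    have h6 : L i = (⌈Real.logb 2 x⌉).toNat + 1 := rfl
    rw [h6, pow_succ]
    calc 2*M ≤ 2*(d i * 2 ^ ((⌈Real.logb 2 x⌉).toNat : ℕ)) := by omega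
      _ = d i * (2 ^ ((⌈Real.logb 2 x⌉).toNat : ℕ) * 2) := by ring
  -- prefix sums
  set P : Fin n → ℕ := fun i => ∑ k ∈ Finset.Iio i, d k with hP
  have hPmono : ∀ i j : Fin n, i < j → P i + d i ≤ P j := by
    intro i j hij
    have h1 : P i + d i = ∑ k ∈ Finset.Iic i, d k := by
      rw [show Finset.Iic i = insert i (Finset.Iio i) from (Finset.Iio_insert i).symm,
        Finset.sum_insert (by simp)]
      show (∑ k ∈ Finset.Iio i, d k) + d i = d i + ∑ k ∈ Finset.Iio i, d k
      omega
    rw [h1]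
    show ∑ k ∈ Finset.Iic i, d k ≤ ∑ k ∈ Finset.Iio j, d k
    apply Finset.sum_le_sum_of_subset
    intro k hk
    simp only [Finset.mem_Iic] at hk
    simp only [Finset.mem_Iio]
    exact lt_of_le_of_lt hk hij
  have hPle : ∀ i, P i + d i ≤ M := by
    intro i
    have h1 : P i + d i = ∑ k ∈ Finset.Iic i, d k := by
      rw [show Finset.Iic i = insert i (Finset.Iio i) from (Finset.Iio_insert i).symm,
        Finset.sum_insert (by simp)]
      show (∑ k ∈ Finset.Iio i, d k) + d i = d i + ∑ k ∈ Finset.Iio i, d k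
      omega
    rw [h1, ← hdsum]
    exact Finset.sum_le_sum_of_subset (Finset.subset_univ _)
  set S : Fin n → ℕ := fun i => 2 * P i + d i with hS
  set a : Fin n → ℕ := fun i => S i * 2^(L i) / (2*M) with ha
  -- floor facts
  have hfl1 : ∀ i, a i * (2*M) ≤ S i * 2^(L i) := fun i => Nat.div_mul_le_self _ _
  have hfl2 : ∀ i, S i * 2^(L i) < (a i + 1) * (2*M) := by
    intro i
    have h := Nat.div_add_mod (S i * 2^(L i)) (2*M)
    have hr : (S i * 2^(L i)) % (2*M) < 2*M := Nat.mod_lt _ (by omega)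
    have e : (a i + 1) * (2*M) = 2*M*(S i * 2^(L i) / (2*M)) + 2*M := by
      show (S i * 2^(L i) / (2*M) + 1) * (2*M) = _
      ring
    rw [e]
    linarith
  have hSlt : ∀ i, S i < 2*M := by
    intro i
    have := hPle i
    have := hdpos i
    simp only [hS]
    omega
  have halt : ∀ i, a i < 2^(L i) := by
    intro i
    rw [ha]
    rw [Nat.div_lt_iff_lt_mul (by omega : 0 < 2*M)]
    calc S i * 2^(L i) < (2*M) * 2^(L i) :=
      (Nat.mul_lt_mul_right (Nat.pow_pos (by norm_num))).mpr (hSlt i)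
      _ = 2^(L i) * (2*M) := by ring
  -- main chain
  have hchain : ∀ i j : Fin n, i < j → (a i + 1) * 2^(L j) ≤ a j * 2^(L i) := by
    intro i j hij
    have h1 : (a i + 1) * (2*M) ≤ (S i + d i) * 2^(L i) := by
      have e1 : (a i + 1) * (2*M) = a i * (2*M) + 2*M := by ring
      have e2 : (S i + d i) * 2^(L i) = S i * 2^(L i) + d i * 2^(L i) := by ring
      rw [e1, e2]
      exact Nat.add_le_add (hfl1 i) (hkey i)
    have h2 : 2 * P j * 2^(L j) < a j * (2*M) := by
      have e1 : S j * 2^(L j) = 2 * P j * 2^(L j) + d j * 2^(L j) := by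
        simp only [hS]; ring
      have h3 := hfl2 j
      rw [e1] at h3
      have h4 := hkey j
      have e2 : (a j + 1) * (2*M) = a j * (2*M) + 2*M := by ring
      rw [e2] at h3
      omega
    have h3 : S i + d i ≤ 2 * P j := by
      have := hPmono i j hij
      simp only [hS]
      omega
    have hchain2 : (a i + 1) * 2^(L j) * (2*M) < a j * 2^(L i) * (2*M) := by
      calc (a i + 1) * 2^(L j) * (2*M) = (a i + 1) * (2*M) * 2^(L j) := by ring
        _ ≤ (S i + d i) * 2^(L i) * 2^(L j) := Nat.mul_le_mul_right _ h1
        _ ≤ 2 * P j * 2^(L i) * 2^(L j) := by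
            apply Nat.mul_le_mul_right
            exact Nat.mul_le_mul_right _ h3
        _ = 2 * P j * 2^(L j) * 2^(L i) := by ring
        _ < a j * (2*M) * 2^(L i) :=
            (Nat.mul_lt_mul_right (Nat.pow_pos (by norm_num))).mpr h2
        _ = a j * 2^(L i) * (2*M) := by ring
    exact le_of_lt (Nat.lt_of_mul_lt_mul_right hchain2)
  refine ⟨fun i => fbits (L i) (a i), ?_, ?_, ?_⟩
  · intro i
    rw [fbits_length]
    exact hLcast i
  · intro i j hij
    rcases lt_or_gt_of_ne hij with h | h
    · exact (fbits_key _ _ _ _ (halt i) (halt j) (hchain i j h)).2.1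
    · exact (fbits_key _ _ _ _ (halt j) (halt i) (hchain j i h)).2.2
  · intro i j hij
    exact (fbits_key _ _ _ _ (halt i) (halt j) (hchain i j hij)).1
end

section
/- Let f_1, …, f_n ∈ [0,1) be real numbers and k_1, …, k_n positive integers such that for all i ≠ j, |f_i − f_j| ≥ 2^{−k_i}. For each i, let c_i be the binary string of length k_i whose bits are the first k_i bits of the binary expansion of f_i (i.e., c_i is the k_i-digit binary representation of ⌊f_i · 2^{k_i}⌋, padded with leading zeros). Then: (i) for all i ≠ j, c_i is not a prefix of c_j; and (ii) if f_i < f_j then c_i < c_j in lexicographic order. -/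
/-- The `len`-digit binary representation (most significant bit first, padded
with leading zeros) of the natural number `N`. -/
def binCode (N len : ℕ) : List Bool :=
  List.ofFn (fun j : Fin len => N.testBit (len - 1 - (j : ℕ)))

lemma binCode_length (N len : ℕ) : (binCode N len).length = len := by
  simp [binCode]

lemma testBit_div_pow (N s t : ℕ) : (N / 2 ^ s).testBit t = N.testBit (s + t) := by
  rw [← Nat.shiftRight_eq_div_pow, Nat.testBit_shiftRight]

lemma binCode_take (M a s : ℕ) : (binCode M (a + s)).take a = binCode (M / 2 ^ s) a := by
  apply List.ext_getElem
  · simp [binCode]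
  · intro j h1 h2
    simp only [binCode, List.getElem_take, List.getElem_ofFn]
    rw [testBit_div_pow]
    congr 1
    simp [binCode] at h1 h2
    omega

lemma binCode_inj {N M a : ℕ} (hN : N < 2 ^ a) (hM : M < 2 ^ a)
    (h : binCode N a = binCode M a) : N = M := by
  apply Nat.eq_of_testBit_eq
  intro t
  by_cases ht : t < a
  · have hlt : a - 1 - t < a := by omega
    have h2 : (binCode N a)[a - 1 - t]'(by rw [binCode_length]; omega)
        = (binCode M a)[a - 1 - t]'(by rw [binCode_length]; omega) := by
      congr 1
    simp only [binCode, List.getElem_ofFn] at h2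
    rwa [show a - 1 - (a - 1 - t) = t by omega] at h2
  · rw [Nat.testBit_lt_two_pow (lt_of_lt_of_le hN (Nat.pow_le_pow_right (by norm_num) (by omega))),
      Nat.testBit_lt_two_pow (lt_of_lt_of_le hM (Nat.pow_le_pow_right (by norm_num) (by omega)))]

lemma binCode_succ (N a : ℕ) : binCode N (a + 1) = N.testBit a :: binCode N a := by
  simp only [binCode, List.ofFn_succ]
  congr 1
  congr 1
  funext j
  congr 1
  rw [Fin.val_succ]
  omega

lemma binCode_mod (N a s : ℕ) (h : a ≤ s) : binCode (N % 2 ^ s) a = binCode N a := by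
  simp only [binCode]
  congr 1; funext j
  have := j.isLt
  rw [Nat.testBit_mod_two_pow]
  have h2 : a - 1 - (j : ℕ) < s := by omega
  simp [h2]

lemma testBit_top {M a : ℕ} (hM : M < 2 ^ (a + 1)) : M.testBit a = decide (2 ^ a ≤ M) := by
  rw [Nat.testBit_eq_decide_div_mod_eq]
  rcases Nat.lt_or_ge M (2 ^ a) with h | h
  · simp [Nat.div_eq_of_lt h, Nat.not_le.mpr h]
  · have hd : M / 2 ^ a = 1 := by
      apply Nat.div_eq_of_lt_le (by simpa using h)
      rw [pow_succ] at hM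
      omega
    simp [hd, h]

lemma binCode_lex {a N M : ℕ} (h : N < M) (hM : M < 2 ^ a) :
    List.Lex (· < ·) (binCode N a) (binCode M a) := by
  induction a generalizing N M with
  | zero => omega
  | succ a ih =>
    have hNlt : N < 2 ^ (a + 1) := lt_trans h hM
    rw [binCode_succ, binCode_succ, testBit_top hM, testBit_top hNlt]
    have hpos : 0 < 2 ^ a := Nat.pow_pos (by norm_num)
    rcases Nat.lt_or_ge N (2 ^ a) with hN2 | hN2
    · rcases Nat.lt_or_ge M (2 ^ a) with hM2 | hM2
      · rw [decide_eq_false (by omega), decide_eq_false (by omega)]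
        exact List.Lex.cons (ih h hM2)
      · rw [decide_eq_false (by omega), decide_eq_true hM2]
        exact List.Lex.rel (by simp)
    · have hM2 : 2 ^ a ≤ M := le_trans hN2 (le_of_lt h)
      rw [decide_eq_true hN2, decide_eq_true hM2]
      apply List.Lex.cons
      rw [← binCode_mod N a a le_rfl, ← binCode_mod M a a le_rfl]
      have pow2 : 2 ^ (a + 1) = 2 ^ a + 2 ^ a := by rw [pow_succ]; omega
      have hNm : N % 2 ^ a = N - 2 ^ a := by
        rw [Nat.mod_eq_sub_mod hN2, Nat.mod_eq_of_lt (by omega)]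
      have hMm : M % 2 ^ a = M - 2 ^ a := by
        rw [Nat.mod_eq_sub_mod hM2, Nat.mod_eq_of_lt (by omega)]
      exact ih (by omega) (by omega)

lemma lex_append {r : Bool → Bool → Prop} {t1 t2 s1 s2 : List Bool}
    (h : List.Lex r t1 t2) (hl : t1.length = t2.length) :
    List.Lex r (t1 ++ s1) (t2 ++ s2) := by
  induction h with
  | nil => simp at hl
  | rel h => exact List.Lex.rel h
  | cons h ih => exact List.Lex.cons (ih (by simpa using hl))

lemma binCode_floor_take (x : ℝ) (K m : ℕ) (hm : m ≤ K) :
    (binCode ⌊x * 2 ^ K⌋₊ K).take m = binCode ⌊x * 2 ^ m⌋₊ m := by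
  obtain ⟨s, rfl⟩ : ∃ s, K = m + s := ⟨K - m, by omega⟩
  rw [binCode_take]
  congr 1
  rw [← Nat.floor_div_natCast]
  congr 1
  have h2 : ((2 : ℕ) : ℝ) ^ s ≠ 0 := by positivity
  push_cast
  field_simp
  ring

theorem stmt_9 (n : ℕ) (f : Fin n → ℝ) (k : Fin n → ℕ)
    (hf0 : ∀ i, 0 ≤ f i) (hf1 : ∀ i, f i < 1) (hk : ∀ i, 1 ≤ k i)
    (hsep : ∀ i j, i ≠ j → (2 : ℝ) ^ (-(k i : ℤ)) ≤ |f i - f j|)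
    (c : Fin n → List Bool)
    (hc : ∀ i, c i = binCode ⌊f i * 2 ^ (k i)⌋₊ (k i)) :
    (∀ i j, i ≠ j → ¬ (c i <+: c j)) ∧
    (∀ i j, f i < f j → List.Lex (· < ·) (c i) (c j)) := by
  have hfloor_lt : ∀ (i : Fin n) (m : ℕ), ⌊f i * 2 ^ m⌋₊ < 2 ^ m := by
    intro i m
    rw [Nat.floor_lt (mul_nonneg (hf0 i) (by positivity))]
    calc f i * 2 ^ m < 1 * 2 ^ m := by
          apply mul_lt_mul_of_pos_right (hf1 i) (by positivity)
      _ = ((2 ^ m : ℕ) : ℝ) := by push_cast; ring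
  have key : ∀ i j : Fin n, i ≠ j → ∀ m : ℕ, m ≤ k i → m ≤ k j →
      (2 : ℝ) ^ (-(m : ℤ)) ≤ |f i - f j| →
      ⌊f i * 2 ^ m⌋₊ ≠ ⌊f j * 2 ^ m⌋₊ := by
    intro i j hij m _ _ hs hEq
    have h1 : (⌊f i * 2 ^ m⌋₊ : ℝ) ≤ f i * 2 ^ m := Nat.floor_le (mul_nonneg (hf0 i) (by positivity))
    have h2 : f i * 2 ^ m < ⌊f i * 2 ^ m⌋₊ + 1 := Nat.lt_floor_add_one _
    have h3 : (⌊f j * 2 ^ m⌋₊ : ℝ) ≤ f j * 2 ^ m := Nat.floor_le (mul_nonneg (hf0 j) (by positivity))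
    have h4 : f j * 2 ^ m < ⌊f j * 2 ^ m⌋₊ + 1 := Nat.lt_floor_add_one _
    have hEq' : ((⌊f i * 2 ^ m⌋₊ : ℕ) : ℝ) = ((⌊f j * 2 ^ m⌋₊ : ℕ) : ℝ) := by
      exact_mod_cast hEq
    have habs : |f i * 2 ^ m - f j * 2 ^ m| < 1 := by
      rw [abs_sub_lt_iff]; constructor <;> linarith
    have hz : (2 : ℝ) ^ (-(m : ℤ)) = ((2 : ℝ) ^ m)⁻¹ := by
      rw [zpow_neg, zpow_natCast]
    have hpos : (0 : ℝ) < 2 ^ m := by positivity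
    have h5 : (1 : ℝ) ≤ |f i - f j| * 2 ^ m := by
      have := mul_le_mul_of_nonneg_right hs (le_of_lt hpos)
      rwa [hz, inv_mul_cancel₀ (ne_of_gt hpos)] at this
    have h6 : |f i - f j| * 2 ^ m = |f i * 2 ^ m - f j * 2 ^ m| := by
      rw [← sub_mul, abs_mul, abs_of_pos hpos]
    linarith [h6 ▸ h5, habs]
  have part1 : ∀ i j, i ≠ j → ¬ (c i <+: c j) := by
    intro i j hij hpre
    have hlen : k i ≤ k j := by
      have := hpre.length_le
      rwa [hc i, hc j, binCode_length, binCode_length] at this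
    have htake : (c j).take (k i) = c i := by
      obtain ⟨t, ht⟩ := hpre
      rw [← ht, List.take_append, List.take_of_length_le (by rw [hc i, binCode_length]),
        hc i, binCode_length, Nat.sub_self, List.take_zero, List.append_nil]
    rw [hc i, hc j, binCode_floor_take _ _ _ hlen] at htake
    exact key i j hij (k i) le_rfl hlen (hsep i j hij)
      (binCode_inj (hfloor_lt i (k i)) (hfloor_lt j (k i)) htake.symm)
  refine ⟨part1, ?_⟩
  intro i j hlt
  have hij : i ≠ j := fun h => by subst h; exact lt_irrefl _ hlt
  set m := min (k i) (k j) with hm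
  have hsepm : (2 : ℝ) ^ (-(m : ℤ)) ≤ f j - f i := by
    have habs : |f i - f j| = f j - f i := by
      rw [abs_sub_comm, abs_of_pos (by linarith)]
    rcases le_total (k i) (k j) with h | h
    · have : m = k i := by omega
      rw [this]
      have hs := hsep i j hij
      rwa [habs] at hs
    · have : m = k j := by omega
      rw [this]
      have := hsep j i hij.symm
      rwa [abs_of_pos (by linarith)] at this
  have hmi : m ≤ k i := min_le_left _ _
  have hmj : m ≤ k j := min_le_right _ _
  have hAB : ⌊f i * 2 ^ m⌋₊ < ⌊f j * 2 ^ m⌋₊ := by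
    have hpos : (0 : ℝ) < 2 ^ m := by positivity
    have h1 : (⌊f i * 2 ^ m⌋₊ : ℝ) + 1 ≤ f j * 2 ^ m := by
      have hfl : (⌊f i * 2 ^ m⌋₊ : ℝ) ≤ f i * 2 ^ m := Nat.floor_le (mul_nonneg (hf0 i) (by positivity))
      have hz : (2 : ℝ) ^ (-(m : ℤ)) * 2 ^ m = 1 := by
        rw [zpow_neg, zpow_natCast, inv_mul_cancel₀ (ne_of_gt hpos)]
      nlinarith [mul_le_mul_of_nonneg_right hsepm (le_of_lt hpos)]
    have := Nat.le_floor (α := ℝ) (by push_cast; linarith : ((⌊f i * 2 ^ m⌋₊ + 1 : ℕ) : ℝ) ≤ f j * 2 ^ m)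
    omega
  have hlex : List.Lex (· < ·) ((c i).take m) ((c j).take m) := by
    rw [hc i, hc j, binCode_floor_take _ _ _ hmi, binCode_floor_take _ _ _ hmj]
    exact binCode_lex hAB (hfloor_lt j m)
  rw [← List.take_append_drop m (c i), ← List.take_append_drop m (c j)]
  apply lex_append hlex
  rw [List.length_take, List.length_take, hc i, hc j, binCode_length, binCode_length]
  omega
end

section
/- Let c_0, c_1 be real numbers with 0 < c_0 ≤ c_1 and let C > 0 satisfy e^{−c_0·C} + e^{−c_1·C} = 1. For a binary string w, define cost(w) = c_0·(number of 0s in w) + c_1·(number of 1s in w). Let k ≥ 1 and let d_1, …, d_k be positive integers with d_1 + ⋯ + d_k = m. Then there exist binary strings w_1, …, w_k such that for all i ≠ j, w_i is not a prefix of w_j, and for each i, cost(w_i) < ln( m / d_i ) / C + c_1. -/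
/-- The cost of a binary string when a `0` costs `c₀` and a `1` costs `c₁`. -/
def strCost (c₀ c₁ : ℝ) (w : List Bool) : ℝ :=
  c₀ * (w.count false : ℝ) + c₁ * (w.count true : ℝ)

noncomputable def nodePr (p q : ℝ) : List Bool → ℝ
  | [] => 1
  | b :: u => (if b then q else p) * nodePr p q u

noncomputable def nodeA (p q : ℝ) : List Bool → ℝ
  | [] => 0
  | b :: u => if b then p + q * nodeA p q u else p * nodeA p q u

noncomputable def enc (p q : ℝ) : ℕ → ℝ → List Bool
  | 0, _ => []
  | n+1, x => if x < p then false :: enc p q n (x / p) else true :: enc p q n ((x - p) / q)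
  termination_by n _ => n

section Tree

variable {p q : ℝ}

lemma nodePr_pos (hp : 0 < p) (hq : 0 < q) (u : List Bool) : 0 < nodePr p q u := by
  induction u with
  | nil => exact one_pos
  | cons b u ih => cases b <;> simp [nodePr] <;> positivity

lemma nodePr_append (u v : List Bool) :
    nodePr p q (u ++ v) = nodePr p q u * nodePr p q v := by
  induction u with
  | nil => simp [nodePr]
  | cons b u ih => simp [nodePr, ih]; ring

lemma nodeA_append (u v : List Bool) :
    nodeA p q (u ++ v) = nodeA p q u + nodePr p q u * nodeA p q v := by
  induction u with
  | nil => simp [nodeA, nodePr]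
  | cons b u ih => cases b <;> simp [nodeA, nodePr, ih] <;> ring

lemma nodeA_nonneg_and (hp : 0 < p) (hq : 0 < q) (hpq : p + q = 1) (u : List Bool) :
    0 ≤ nodeA p q u ∧ nodeA p q u + nodePr p q u ≤ 1 := by
  induction u with
  | nil => simp [nodeA, nodePr]
  | cons b u ih =>
      obtain ⟨h1, h2⟩ := ih
      have hpr := nodePr_pos hp hq u
      cases b <;> simp [nodeA, nodePr] <;> constructor <;> nlinarith

lemma enc_mem (hp : 0 < p) (hq : 0 < q) (hpq : p + q = 1) :
    ∀ (n : ℕ) (x : ℝ), 0 ≤ x → x < 1 →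
      nodeA p q (enc p q n x) ≤ x ∧ x < nodeA p q (enc p q n x) + nodePr p q (enc p q n x) := by
  intro n
  induction n with
  | zero => intro x h0 h1; simpa [enc, nodeA, nodePr] using ⟨h0, h1⟩
  | succ n ih =>
      intro x h0 h1
      rw [enc]
      by_cases hx : x < p
      · have h0' : 0 ≤ x / p := by positivity
        have h1' : x / p < 1 := (div_lt_one hp).2 hx
        obtain ⟨ha, hb⟩ := ih (x / p) h0' h1'
        simp only [if_pos hx, nodeA, nodePr, if_neg Bool.false_ne_true]
        constructor
        · calc p * nodeA p q (enc p q n (x / p)) ≤ p * (x / p) := by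
                exact mul_le_mul_of_nonneg_left ha hp.le
            _ = x := by field_simp
        · have := mul_lt_mul_of_pos_left hb hp
          calc x = p * (x / p) := by field_simp
            _ < p * (nodeA p q (enc p q n (x / p)) + nodePr p q (enc p q n (x / p))) := this
            _ = p * nodeA p q (enc p q n (x / p)) + p * nodePr p q (enc p q n (x / p)) := by ring
      · have hx' : p ≤ x := not_lt.1 hx
        have h0' : 0 ≤ (x - p) / q := by
          apply div_nonneg _ hq.le; linarith
        have h1' : (x - p) / q < 1 := by
          rw [div_lt_one hq]; linarith
        obtain ⟨ha, hb⟩ := ih ((x - p) / q) h0' h1'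
        simp only [if_neg hx, nodeA, nodePr, if_true]
        have hqx : q * ((x - p) / q) = x - p := by field_simp
        constructor
        · nlinarith [mul_le_mul_of_nonneg_left ha hq.le]
        · nlinarith [mul_lt_mul_of_pos_left hb hq]

lemma enc_succ (n : ℕ) : ∀ x : ℝ, ∃ b : Bool, enc p q (n+1) x = enc p q n x ++ [b] := by
  induction n with
  | zero =>
      intro x
      by_cases hx : x < p
      · exact ⟨false, by simp [enc, hx]⟩
      · exact ⟨true, by simp [enc, hx]⟩
  | succ n ih =>
      intro x
      by_cases hx : x < p
      · obtain ⟨b, hb⟩ := ih (x / p)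
        have e1 : enc p q (n + 1 + 1) x = false :: enc p q (n + 1) (x / p) := by
          rw [enc]; rw [if_pos hx]
        have e2 : enc p q (n + 1) x = false :: enc p q n (x / p) := by
          rw [enc]; rw [if_pos hx]
        exact ⟨b, by rw [e1, hb, e2]; rfl⟩
      · obtain ⟨b, hb⟩ := ih ((x - p) / q)
        have e1 : enc p q (n + 1 + 1) x = true :: enc p q (n + 1) ((x - p) / q) := by
          rw [enc]; rw [if_neg hx]
        have e2 : enc p q (n + 1) x = true :: enc p q n ((x - p) / q) := by
          rw [enc]; rw [if_neg hx]
        exact ⟨b, by rw [e1, hb, e2]; rfl⟩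

lemma enc_pr_le (hp : 0 < p) (hq : 0 < q) (hqp : q ≤ p) (n : ℕ) :
    ∀ x : ℝ, nodePr p q (enc p q n x) ≤ p ^ n := by
  induction n with
  | zero => intro x; simp [enc, nodePr]
  | succ n ih =>
      intro x
      rw [enc]
      by_cases hx : x < p
      · simp only [if_pos hx, nodePr, if_neg Bool.false_ne_true, pow_succ]
        have := ih (x / p)
        nlinarith [nodePr_pos hp hq (enc p q n (x / p))]
      · simp only [if_neg hx, nodePr, if_true, pow_succ]
        have := ih ((x - p) / q)
        nlinarith [nodePr_pos hp hq (enc p q n ((x - p) / q))]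

end Tree

lemma exists_code {p q : ℝ} (hp : 0 < p) (hq : 0 < q) (hqp : q ≤ p) (hpq : p + q = 1)
    (x t : ℝ) (hx0 : 0 ≤ x) (hx1 : x < 1) (ht : 0 < t) (ht1 : t ≤ 1) :
    ∃ u : List Bool, nodeA p q u ≤ x ∧ x < nodeA p q u + nodePr p q u ∧
      nodePr p q u ≤ t ∧ q * t < nodePr p q u := by
  have hp1 : p < 1 := by linarith
  have hex : ∃ n, nodePr p q (enc p q n x) ≤ t := by
    obtain ⟨n, hn⟩ := exists_pow_lt_of_lt_one ht hp1
    exact ⟨n, le_trans (enc_pr_le hp hq hqp n x) hn.le⟩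
  refine ⟨enc p q (Nat.find hex) x, (enc_mem hp hq hpq _ x hx0 hx1).1,
    (enc_mem hp hq hpq _ x hx0 hx1).2, Nat.find_spec hex, ?_⟩
  rcases Nat.eq_zero_or_pos (Nat.find hex) with h0 | hpos
  · rw [h0]
    have : nodePr p q (enc p q 0 x) = 1 := by simp [enc, nodePr]
    rw [this]
    calc q * t ≤ q * 1 := mul_le_mul_of_nonneg_left ht1 hq.le
      _ = q := mul_one q
      _ < 1 := by linarith
  · obtain ⟨n', hn'⟩ := Nat.exists_eq_succ_of_ne_zero hpos.ne'
    have hlt : n' < Nat.find hex := by omega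
    have hmin : t < nodePr p q (enc p q n' x) := by
      have := Nat.find_min hex hlt
      push_neg at this
      exact this
    obtain ⟨b, hb⟩ := enc_succ (p := p) (q := q) n' x
    rw [hn', hb, nodePr_append]
    have hpr' := nodePr_pos hp hq (enc p q n' x)
    have hqb : q ≤ nodePr p q [b] := by
      cases b <;> simp [nodePr] <;> linarith
    calc q * t = t * q := mul_comm q t
      _ < nodePr p q (enc p q n' x) * q := mul_lt_mul_of_pos_right hmin hq
      _ ≤ nodePr p q (enc p q n' x) * nodePr p q [b] :=
          mul_le_mul_of_nonneg_left hqb hpr'.le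

lemma krause_main {p q : ℝ} (hp : 0 < p) (hq : 0 < q) (hqp : q ≤ p) (hpq : p + q = 1)
    (k : ℕ) (P : Fin k → ℝ) (hP : ∀ i, 0 < P i) (hs : ∑ i, P i = 1) (hanti : Antitone P) :
    ∃ w : Fin k → List Bool,
      (∀ i j, i ≠ j → ¬ (w i <+: w j)) ∧ (∀ i, q * P i < nodePr p q (w i)) := by
  classical
  set F : Fin k → ℝ := fun i => ∑ t ∈ Finset.Iio i, P t with hF
  have hF0 : ∀ i, 0 ≤ F i := fun i => Finset.sum_nonneg fun t _ => (hP t).le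
  have hFP : ∀ i, F i + P i ≤ 1 := by
    intro i
    have : F i + P i = ∑ t ∈ insert i (Finset.Iio i), P t := by
      rw [Finset.sum_insert (by simp)]; ring
    rw [this, ← hs]
    exact Finset.sum_le_sum_of_subset_of_nonneg (Finset.subset_univ _) fun t _ _ => (hP t).le
  have hFlt : ∀ i j : Fin k, i < j → F i + P i ≤ F j := by
    intro i j hij
    have : F i + P i = ∑ t ∈ insert i (Finset.Iio i), P t := by
      rw [Finset.sum_insert (by simp)]; ring
    rw [this]
    apply Finset.sum_le_sum_of_subset_of_nonneg _ fun t _ _ => (hP t).le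
    intro t ht
    simp only [Finset.mem_insert, Finset.mem_Iio] at ht ⊢
    rcases ht with rfl | ht
    · exact hij
    · exact ht.trans hij
  have hx1 : ∀ i, F i < 1 := fun i => by have := hFP i; have := hP i; linarith
  have ht1 : ∀ i, P i ≤ 1 := fun i => by have := hFP i; have := hF0 i; linarith
  choose w hmemA hmemB hup hlow using fun i =>
    exists_code hp hq hqp hpq (F i) (P i) (hF0 i) (hx1 i) (hP i) (ht1 i)
  refine ⟨w, ?_, hlow⟩
  intro i j hij hpre
  obtain ⟨v, hv⟩ := hpre
  have hAv := nodeA_nonneg_and hp hq hpq v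
  have hprv := nodePr_pos hp hq v
  have hpri := nodePr_pos hp hq (w i)
  have hA : nodeA p q (w i) ≤ nodeA p q (w j) := by
    rw [← hv, nodeA_append]
    nlinarith [hAv.1]
  have hB : nodeA p q (w j) + nodePr p q (w j) ≤ nodeA p q (w i) + nodePr p q (w i) := by
    rw [← hv, nodeA_append, nodePr_append]
    nlinarith [hAv.2]
  have hai := hmemA i
  have hbi := hmemB i
  have haj := hmemA j
  have hbj := hmemB j
  have hupi := hup i
  have hupj := hup j
  rcases lt_or_gt_of_ne hij with h | h
  · have h1 : F i + P i ≤ F j := hFlt i j h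
    linarith
  · have h1 : F j + P j ≤ F i := hFlt j i h
    have h2 : P i ≤ P j := hanti h.le
    linarith

lemma nodePr_eq_exp (c₀ c₁ C : ℝ) (u : List Bool) :
    nodePr (Real.exp (-(c₀ * C))) (Real.exp (-(c₁ * C))) u =
      Real.exp (-(C * strCost c₀ c₁ u)) := by
  induction u with
  | nil => simp [nodePr, strCost]
  | cons b u ih =>
      cases b
      · have h : strCost c₀ c₁ (false :: u) = strCost c₀ c₁ u + c₀ := by
          simp [strCost, List.count_cons]; push_cast; ring
        rw [h]
        show Real.exp (-(c₀ * C)) * nodePr _ _ u = _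
        rw [ih, ← Real.exp_add]; congr 1; ring
      · have h : strCost c₀ c₁ (true :: u) = strCost c₀ c₁ u + c₁ := by
          simp [strCost, List.count_cons]; push_cast; ring
        rw [h]
        show Real.exp (-(c₁ * C)) * nodePr _ _ u = _
        rw [ih, ← Real.exp_add]; congr 1; ring

theorem stmt_12 (c₀ c₁ C : ℝ) (h0 : 0 < c₀) (h01 : c₀ ≤ c₁) (hC : 0 < C)
    (hcap : Real.exp (-(c₀ * C)) + Real.exp (-(c₁ * C)) = 1)
    (k m : ℕ) (hk : 1 ≤ k) (d : Fin k → ℕ) (hd : ∀ i, 0 < d i)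
    (hsum : ∑ i, d i = m) :
    ∃ w : Fin k → List Bool,
      (∀ i j, i ≠ j → ¬ (w i <+: w j)) ∧
      (∀ i, strCost c₀ c₁ (w i) < Real.log ((m : ℝ) / (d i : ℝ)) / C + c₁) := by
  classical
  set p := Real.exp (-(c₀ * C)) with hpdef
  set q := Real.exp (-(c₁ * C)) with hqdef
  have hp : 0 < p := Real.exp_pos _
  have hq : 0 < q := Real.exp_pos _
  have hqp : q ≤ p := Real.exp_le_exp.2 (by nlinarith)
  have i0 : Fin k := ⟨0, hk⟩
  have hm : 0 < m := by
    rw [← hsum]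
    exact Finset.sum_pos (fun i _ => hd i) ⟨i0, Finset.mem_univ i0⟩
  have hmR : (0 : ℝ) < (m : ℝ) := by exact_mod_cast hm
  set σ : Equiv.Perm (Fin k) := Tuple.sort d with hσ
  have hmono : Monotone (d ∘ σ) := Tuple.monotone_sort d
  set ρ : Fin k ≃ Fin k := Fin.revPerm.trans σ with hρ
  set P : Fin k → ℝ := fun t => (d (ρ t) : ℝ) / m with hPdef
  have hP : ∀ t, 0 < P t := fun t => div_pos (by exact_mod_cast hd (ρ t)) hmR
  have hs : ∑ t, P t = 1 := by
    rw [hPdef, ← Finset.sum_div]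
    rw [show ∑ t, ((d (ρ t) : ℝ)) = ∑ t, ((d t : ℝ)) from Equiv.sum_comp ρ (fun t => ((d t : ℝ)))]
    rw [show ∑ t, ((d t : ℝ)) = ((m : ℝ)) by exact_mod_cast congrArg Nat.cast hsum]
    exact div_self hmR.ne'
  have hanti : Antitone P := by
    intro s t hst
    have h1 : t.rev ≤ s.rev := Fin.rev_le_rev.2 hst
    have h2 : d (σ t.rev) ≤ d (σ s.rev) := hmono h1
    have h3 : (d (ρ t) : ℝ) ≤ (d (ρ s) : ℝ) := by exact_mod_cast h2
    exact (div_le_div_iff_of_pos_right hmR).2 h3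
  obtain ⟨w', hpf, hlow⟩ := krause_main hp hq hqp hcap k P hP hs hanti
  refine ⟨fun i => w' (ρ.symm i), ?_, ?_⟩
  · intro i j hij
    exact hpf _ _ fun h => hij (by simpa using congrArg ρ h)
  · intro i
    have hdi : (0 : ℝ) < (d i : ℝ) := by exact_mod_cast hd i
    have hlow' := hlow (ρ.symm i)
    rw [nodePr_eq_exp c₀ c₁ C] at hlow'
    have hPval : P (ρ.symm i) = (d i : ℝ) / m := by
      rw [hPdef]; simp
    rw [hPval] at hlow'
    set s := strCost c₀ c₁ (w' (ρ.symm i)) with hsdef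
    have hpos : (0 : ℝ) < q * ((d i : ℝ) / m) := by positivity
    have hlog := Real.log_lt_log hpos hlow'
    rw [Real.log_exp, Real.log_mul hq.ne' (by positivity), hqdef, Real.log_exp] at hlog
    have hloginv : Real.log ((d i : ℝ) / m) = -Real.log ((m : ℝ) / (d i : ℝ)) := by
      rw [show ((d i : ℝ) / m) = ((m : ℝ) / (d i : ℝ))⁻¹ by rw [inv_div], Real.log_inv]
    rw [hloginv] at hlog
    set L := Real.log ((m : ℝ) / (d i : ℝ)) with hL
    -- hlog : -(c₁ * C) + -L < -(C * s)
    have h2 : s < (c₁ * C + L) / C := by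
      rw [lt_div_iff₀ hC]; nlinarith
    have h3 : (c₁ * C + L) / C = L / C + c₁ := by
      field_simp; ring
    linarith [h3 ▸ h2]
end
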